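/- arXiv:2301.12250 — 9 statements merged into one kernel-verified Lean document; each statement's English description precedes it below -/
import Mathlib

section
/- Let λ > 0 and let y = (y_1, ..., y_m) be points in ℝ^d. If S₀ and S₁ are both λ-good subsets of y (i.e., for each of them the matrix Σ_S = (1/m)∑_{i∈S} y_i y_iᵀ is positive definite and every i ∈ S satisfies ‖Σ_S^{-1/2} y_i‖² ≤ λ), then S₀ ∪ S₁ is contained in some λ-good subset; consequently there is a unique largest λ-good subset S* containing every λ-good subset. -/
open Matrix BigOperators

/-- The (scaled) covariance of the points of `y` indexed by `S`:
`Σ_S = (1/m) ∑_{i ∈ S} y_i y_iᵀ`. -/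
noncomputable def covOf {d : ℕ} (m : ℕ) (y : Fin m → Fin d → ℝ) (S : Finset (Fin m)) :
    Matrix (Fin d) (Fin d) ℝ :=
  (m : ℝ)⁻¹ • ∑ i ∈ S, Matrix.vecMulVec (y i) (y i)

/-- `S` is a `λ`-good subset of `y`: `Σ_S` is positive definite and every `i ∈ S`
satisfies `y_iᵀ Σ_S⁻¹ y_i ≤ λ`. -/
def IsGoodSubset {d m : ℕ} (y : Fin m → Fin d → ℝ) (lam : ℝ) (S : Finset (Fin m)) : Prop :=
  (covOf m y S).PosDef ∧ ∀ i ∈ S, y i ⬝ᵥ (covOf m y S)⁻¹ *ᵥ y i ≤ lam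

lemma aux_vecMulVec_self_mulVec {d : ℕ} (x v : Fin d → ℝ) :
    Matrix.vecMulVec x x *ᵥ v = (x ⬝ᵥ v) • x := by
  ext j
  simp [Matrix.mulVec, Matrix.vecMulVec_apply, dotProduct, Finset.mul_sum, mul_comm,
    mul_left_comm]

lemma aux_covOf_isHermitian {d m : ℕ} (y : Fin m → Fin d → ℝ) (U : Finset (Fin m)) :
    (covOf m y U).IsHermitian := by
  unfold covOf Matrix.IsHermitian
  rw [conjTranspose_smul, conjTranspose_sum]
  congr 1
  refine Finset.sum_congr rfl fun i _ => ?_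
  ext a b
  simp [Matrix.vecMulVec_apply, mul_comm]

lemma aux_dot_covOf {d m : ℕ} (y : Fin m → Fin d → ℝ) (U : Finset (Fin m)) (v : Fin d → ℝ) :
    v ⬝ᵥ covOf m y U *ᵥ v = (m : ℝ)⁻¹ * ∑ i ∈ U, (y i ⬝ᵥ v) ^ 2 := by
  unfold covOf
  have hsum : (∑ i ∈ U, Matrix.vecMulVec (y i) (y i)) *ᵥ v
      = ∑ i ∈ U, Matrix.vecMulVec (y i) (y i) *ᵥ v := by
    ext j
    simp only [Matrix.mulVec, dotProduct, Matrix.sum_apply, Finset.sum_mul, Finset.sum_apply]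
    exact Finset.sum_comm
  rw [smul_mulVec, dotProduct_smul, hsum, smul_eq_mul]
  congr 1
  have h2 : v ⬝ᵥ (∑ i ∈ U, Matrix.vecMulVec (y i) (y i) *ᵥ v)
      = ∑ i ∈ U, v ⬝ᵥ (Matrix.vecMulVec (y i) (y i) *ᵥ v) := by
    simp only [dotProduct, Finset.sum_apply, Finset.mul_sum]
    exact Finset.sum_comm
  rw [h2]
  refine Finset.sum_congr rfl fun i _ => ?_
  rw [aux_vecMulVec_self_mulVec, dotProduct_smul, smul_eq_mul, dotProduct_comm, sq]

lemma aux_covOf_posSemidef {d m : ℕ} (y : Fin m → Fin d → ℝ) (U : Finset (Fin m)) :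
    (covOf m y U).PosSemidef := by
  refine Matrix.PosSemidef.of_dotProduct_mulVec_nonneg (aux_covOf_isHermitian y U) fun v => ?_
  rw [star_trivial, aux_dot_covOf]
  positivity

lemma aux_covOf_sdiff_add {d m : ℕ} (y : Fin m → Fin d → ℝ) {T S : Finset (Fin m)}
    (h : T ⊆ S) : covOf m y S = covOf m y T + covOf m y (S \ T) := by
  unfold covOf
  rw [← smul_add, ← Finset.sum_sdiff h, add_comm]

lemma aux_posDef_mono {d m : ℕ} (y : Fin m → Fin d → ℝ) {T S : Finset (Fin m)}
    (h : T ⊆ S) (hT : (covOf m y T).PosDef) : (covOf m y S).PosDef := by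
  rw [aux_covOf_sdiff_add y h]
  exact hT.add_posSemidef (aux_covOf_posSemidef y _)

lemma aux_quad_lower {d : ℕ} {A : Matrix (Fin d) (Fin d) ℝ} (hA : A.PosDef)
    (v w : Fin d → ℝ) : 2 * (w ⬝ᵥ v) - w ⬝ᵥ A *ᵥ w ≤ v ⬝ᵥ A⁻¹ *ᵥ v := by
  have hAinv : A * A⁻¹ = 1 := Matrix.mul_nonsing_inv A hA.det_pos.ne'.isUnit
  set z := A⁻¹ *ᵥ v with hz
  have hAz : A *ᵥ z = v := by rw [hz, Matrix.mulVec_mulVec, hAinv, Matrix.one_mulVec]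
  have hsym : ∀ a b : Fin d → ℝ, a ⬝ᵥ A *ᵥ b = (A *ᵥ a) ⬝ᵥ b := by
    intro a b
    rw [dotProduct_mulVec, ← Matrix.mulVec_transpose]
    congr 1
    have := hA.isHermitian
    rw [Matrix.IsHermitian, conjTranspose_eq_transpose_of_trivial] at this
    rw [this]
  have h0 : 0 ≤ (w - z) ⬝ᵥ A *ᵥ (w - z) := by
    have := hA.posSemidef.dotProduct_mulVec_nonneg (w - z)
    rwa [star_trivial] at this
  have hexp : (w - z) ⬝ᵥ A *ᵥ (w - z)
      = w ⬝ᵥ A *ᵥ w - w ⬝ᵥ v - (w ⬝ᵥ v) + v ⬝ᵥ A⁻¹ *ᵥ v := by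
    rw [Matrix.mulVec_sub, dotProduct_sub, sub_dotProduct, sub_dotProduct]
    have e1 : w ⬝ᵥ A *ᵥ z = w ⬝ᵥ v := by rw [hAz]
    have e2 : z ⬝ᵥ A *ᵥ w = w ⬝ᵥ v := by rw [hsym, hAz, dotProduct_comm]
    have e3 : z ⬝ᵥ A *ᵥ z = v ⬝ᵥ A⁻¹ *ᵥ v := by rw [hAz, dotProduct_comm]
    rw [e1, e2, e3]
    ring
  linarith [hexp ▸ h0]

lemma aux_inv_quad_mono {d : ℕ} {A B : Matrix (Fin d) (Fin d) ℝ}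
    (hA : A.PosDef) (hB : B.PosDef) (hAB : (B - A).PosSemidef) (v : Fin d → ℝ) :
    v ⬝ᵥ B⁻¹ *ᵥ v ≤ v ⬝ᵥ A⁻¹ *ᵥ v := by
  have hBinv : B * B⁻¹ = 1 := Matrix.mul_nonsing_inv B hB.det_pos.ne'.isUnit
  set w := B⁻¹ *ᵥ v with hw
  have hBw : B *ᵥ w = v := by rw [hw, Matrix.mulVec_mulVec, hBinv, Matrix.one_mulVec]
  have h1 : v ⬝ᵥ B⁻¹ *ᵥ v = w ⬝ᵥ v := dotProduct_comm _ _
  have h2 : w ⬝ᵥ B *ᵥ w = w ⬝ᵥ v := by rw [hBw]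
  have h3 : w ⬝ᵥ A *ᵥ w ≤ w ⬝ᵥ B *ᵥ w := by
    have := hAB.dotProduct_mulVec_nonneg w
    rw [star_trivial, Matrix.sub_mulVec, dotProduct_sub] at this
    linarith
  have h4 := aux_quad_lower hA v w
  linarith

lemma aux_good_of_cover {d m : ℕ} (y : Fin m → Fin d → ℝ) (lam : ℝ)
    (U : Finset (Fin m)) (T₀ : Finset (Fin m)) (hT₀U : T₀ ⊆ U)
    (hT₀ : (covOf m y T₀).PosDef)
    (hcov : ∀ i ∈ U, ∃ T, T ⊆ U ∧ IsGoodSubset y lam T ∧ i ∈ T) :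
    IsGoodSubset y lam U := by
  have hU : (covOf m y U).PosDef := aux_posDef_mono y hT₀U hT₀
  refine ⟨hU, fun i hi => ?_⟩
  obtain ⟨T, hTU, hTgood, hiT⟩ := hcov i hi
  have hPSD : (covOf m y U - covOf m y T).PosSemidef := by
    rw [aux_covOf_sdiff_add y hTU]
    simpa using aux_covOf_posSemidef y (U \ T)
  calc y i ⬝ᵥ (covOf m y U)⁻¹ *ᵥ y i
      ≤ y i ⬝ᵥ (covOf m y T)⁻¹ *ᵥ y i := aux_inv_quad_mono hTgood.1 hU hPSD (y i)
    _ ≤ lam := hTgood.2 i hiT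

/-- If `S₀` and `S₁` are λ-good subsets, their union is contained in some λ-good subset;
consequently there is a unique largest λ-good subset containing every λ-good subset. -/
theorem union_of_good_subsets_contained_and_unique_largest
    {d m : ℕ} (y : Fin m → Fin d → ℝ) (lam : ℝ) (hlam : 0 < lam)
    (S₀ S₁ : Finset (Fin m))
    (h₀ : IsGoodSubset y lam S₀) (h₁ : IsGoodSubset y lam S₁) :
    (∃ S, IsGoodSubset y lam S ∧ S₀ ∪ S₁ ⊆ S) ∧
    (∃! Sstar : Finset (Fin m),
      IsGoodSubset y lam Sstar ∧ ∀ T, IsGoodSubset y lam T → T ⊆ Sstar) := by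
  classical
  constructor
  · refine ⟨S₀ ∪ S₁, ?_, subset_rfl⟩
    refine aux_good_of_cover y lam _ S₀ Finset.subset_union_left h₀.1 fun i hi => ?_
    rcases Finset.mem_union.1 hi with h | h
    · exact ⟨S₀, Finset.subset_union_left, h₀, h⟩
    · exact ⟨S₁, Finset.subset_union_right, h₁, h⟩
  · set Sstar : Finset (Fin m) :=
      (Finset.univ.filter (fun T => IsGoodSubset y lam T)).sup id with hSstar
    have hsub : ∀ T, IsGoodSubset y lam T → T ⊆ Sstar := by
      intro T hT
      exact Finset.le_sup (f := id) (Finset.mem_filter.2 ⟨Finset.mem_univ T, hT⟩)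
    have hgood : IsGoodSubset y lam Sstar := by
      refine aux_good_of_cover y lam Sstar S₀ (hsub S₀ h₀) h₀.1 fun i hi => ?_
      rw [hSstar, Finset.mem_sup] at hi
      obtain ⟨T, hTmem, hiT⟩ := hi
      have hTgood : IsGoodSubset y lam T := (Finset.mem_filter.1 hTmem).2
      exact ⟨T, hsub T hTgood, hTgood, hiT⟩
    refine ⟨Sstar, ⟨hgood, hsub⟩, ?_⟩
    rintro S ⟨hSgood, hSsub⟩
    exact Finset.Subset.antisymm (hsub S hSgood) (hSsub Sstar hgood)
end

section
/- Let λ > 0 and m ≥ 2λ. Let y be a dataset of size m in ℝ^d and let S be a λ-good subset of y. Then for any index j ∈ [m], the set S \ {j} is an e^{2λ/m}·λ-good subset of y (provided Σ_{S\{j\}} remains positive definite, which is implied by the hypotheses). -/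
open Matrix BigOperators

lemma mulVec_vecMulVec {d : ℕ} (a x : Fin d → ℝ) :
    (Matrix.vecMulVec a a) *ᵥ x = (a ⬝ᵥ x) • a := by
  ext i
  simp only [Matrix.mulVec, dotProduct, Matrix.vecMulVec_apply, Pi.smul_apply, smul_eq_mul,
    Finset.sum_mul, ← Finset.mul_sum]
  exact Finset.sum_congr rfl fun k _ => by ring

lemma quad_vecMulVec {d : ℕ} (a x : Fin d → ℝ) :
    x ⬝ᵥ (Matrix.vecMulVec a a) *ᵥ x = (x ⬝ᵥ a) ^ 2 := by
  rw [mulVec_vecMulVec, dotProduct_smul, smul_eq_mul, dotProduct_comm, sq]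

open scoped MatrixOrder in
lemma cs_posdef {d : ℕ} {A : Matrix (Fin d) (Fin d) ℝ} (hA : A.PosDef) (u v : Fin d → ℝ) :
    (u ⬝ᵥ v) ^ 2 ≤ (u ⬝ᵥ A *ᵥ u) * (v ⬝ᵥ A⁻¹ *ᵥ v) := by
  set B := CFC.sqrt A with hBdef
  have hBB : B * B = A := CFC.sqrt_mul_sqrt_self A hA.posSemidef.nonneg
  have hBsym : Bᵀ = B := by
    have := (CFC.sqrt_nonneg A).posSemidef.isHermitian
    simpa [Matrix.IsHermitian, Matrix.conjTranspose_eq_transpose_of_trivial, hBdef] using this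
  have hdet : IsUnit A.det := (Matrix.isUnit_iff_isUnit_det A).mp hA.isUnit
  set w : Fin d → ℝ := A⁻¹ *ᵥ v with hw
  have hAw : A *ᵥ w = v := by
    rw [hw, Matrix.mulVec_mulVec, Matrix.mul_nonsing_inv _ hdet, Matrix.one_mulVec]
  have key : u ⬝ᵥ v = (B *ᵥ u) ⬝ᵥ (B *ᵥ w) := by
    rw [← hAw, ← hBB, ← Matrix.mulVec_mulVec, Matrix.dotProduct_mulVec u B,
      ← Matrix.mulVec_transpose, hBsym]
  have hquad : ∀ z : Fin d → ℝ, (B *ᵥ z) ⬝ᵥ (B *ᵥ z) = z ⬝ᵥ A *ᵥ z := by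
    intro z
    rw [Matrix.dotProduct_mulVec (B *ᵥ z) B, ← Matrix.mulVec_transpose, hBsym,
      Matrix.mulVec_mulVec, hBB, dotProduct_comm]
  have hwv : w ⬝ᵥ A *ᵥ w = v ⬝ᵥ A⁻¹ *ᵥ v := by
    rw [hAw, dotProduct_comm, hw]
  calc (u ⬝ᵥ v) ^ 2 = ((B *ᵥ u) ⬝ᵥ (B *ᵥ w)) ^ 2 := by rw [key]
    _ ≤ ((B *ᵥ u) ⬝ᵥ (B *ᵥ u)) * ((B *ᵥ w) ⬝ᵥ (B *ᵥ w)) := by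
        simpa [dotProduct, sq] using
          Finset.sum_mul_sq_le_sq_mul_sq Finset.univ (B *ᵥ u) (B *ᵥ w)
    _ = (u ⬝ᵥ A *ᵥ u) * (v ⬝ᵥ A⁻¹ *ᵥ v) := by rw [hquad, hquad, hwv]


/-- Removing one point from a λ-good subset yields an `e^{2λ/m}·λ`-good subset,
provided `m ≥ 2λ`. -/
theorem erase_of_good_subset
    {d m : ℕ} (y : Fin m → Fin d → ℝ) (lam : ℝ) (hlam : 0 < lam)
    (hm : 2 * lam ≤ (m : ℝ))
    (S : Finset (Fin m)) (hS : IsGoodSubset y lam S) (j : Fin m) :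
    IsGoodSubset y (Real.exp (2 * lam / m) * lam) (S.erase j) := by
  obtain ⟨hpd, hgood⟩ := hS
  have hmpos : (0:ℝ) < m := lt_of_lt_of_le (by linarith) hm
  have hexp1 : (1:ℝ) ≤ Real.exp (2 * lam / m) := Real.one_le_exp (by positivity)
  by_cases hj : j ∈ S
  case neg =>
    rw [Finset.erase_eq_of_notMem hj]
    exact ⟨hpd, fun i hi => (hgood i hi).trans (le_mul_of_one_le_left hlam.le hexp1)⟩
  -- main case
  have hs2 : lam / m ≤ 1/2 := by rw [div_le_iff₀ hmpos]; linarith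
  have hs0 : 0 < lam / m := by positivity
  have hnnS : ∀ x, 0 ≤ x ⬝ᵥ (covOf m y S) *ᵥ x := fun x => by
    simpa using hpd.posSemidef.dotProduct_mulVec_nonneg x
  have hsplit : covOf m y S
      = covOf m y (S.erase j) + (m:ℝ)⁻¹ • Matrix.vecMulVec (y j) (y j) := by
    unfold covOf
    rw [← Finset.sum_erase_add S _ hj, smul_add]
  have hquadrel : ∀ x : Fin d → ℝ, x ⬝ᵥ (covOf m y S) *ᵥ x
      = x ⬝ᵥ (covOf m y (S.erase j)) *ᵥ x + (m:ℝ)⁻¹ * (x ⬝ᵥ y j)^2 := by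
    intro x
    rw [hsplit, Matrix.add_mulVec, dotProduct_add, Matrix.smul_mulVec,
      dotProduct_smul, smul_eq_mul, quad_vecMulVec]
  have hconq : ∀ x : Fin d → ℝ,
      (1 - lam / m) * (x ⬝ᵥ (covOf m y S) *ᵥ x) ≤ x ⬝ᵥ (covOf m y (S.erase j)) *ᵥ x := by
    intro x
    have h1 := hquadrel x
    have h2 : (x ⬝ᵥ y j)^2 ≤ (x ⬝ᵥ (covOf m y S) *ᵥ x) * lam :=
      (cs_posdef hpd x (y j)).trans
        (mul_le_mul_of_nonneg_left (hgood j hj) (hnnS x))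
    have h3 : (m:ℝ)⁻¹ * (x ⬝ᵥ y j)^2 ≤ (m:ℝ)⁻¹ * ((x ⬝ᵥ (covOf m y S) *ᵥ x) * lam) :=
      mul_le_mul_of_nonneg_left h2 (by positivity)
    have heq : (m:ℝ)⁻¹ * ((x ⬝ᵥ (covOf m y S) *ᵥ x) * lam)
        = (lam / m) * (x ⬝ᵥ (covOf m y S) *ᵥ x) := by ring
    have heq2 : (1 - lam / m) * (x ⬝ᵥ (covOf m y S) *ᵥ x)
        = (x ⬝ᵥ (covOf m y S) *ᵥ x) - (lam / m) * (x ⬝ᵥ (covOf m y S) *ᵥ x) := by ring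
    linarith [heq ▸ h3]
  have herm : (covOf m y (S.erase j)).IsHermitian := by
    unfold Matrix.IsHermitian
    ext i k
    simp [covOf, Matrix.conjTranspose_apply, Matrix.smul_apply, Matrix.sum_apply,
      Matrix.vecMulVec_apply, mul_comm]
  have hpd' : (covOf m y (S.erase j)).PosDef := by
    refine PosDef.of_dotProduct_mulVec_pos herm fun x hx => ?_
    have h1 : 0 < x ⬝ᵥ (covOf m y S) *ᵥ x := by simpa using hpd.dotProduct_mulVec_pos hx
    have h2 := hconq x
    simp only [star_trivial]
    nlinarith
  refine ⟨hpd', fun i hi => ?_⟩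
  have hiS : i ∈ S := Finset.mem_of_mem_erase hi
  set x := y i with hx
  set q := x ⬝ᵥ (covOf m y (S.erase j))⁻¹ *ᵥ x with hq
  have hq0 : 0 ≤ q := by simpa [hq] using hpd'.inv.posSemidef.dotProduct_mulVec_nonneg x
  set u := (covOf m y (S.erase j))⁻¹ *ᵥ x with hu
  have hdet' : IsUnit (covOf m y (S.erase j)).det :=
    (Matrix.isUnit_iff_isUnit_det _).mp hpd'.isUnit
  have hux : u ⬝ᵥ x = q := by rw [hq, dotProduct_comm, hu]
  have hSu : (covOf m y (S.erase j)) *ᵥ u = x := by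
    rw [hu, Matrix.mulVec_mulVec, Matrix.mul_nonsing_inv _ hdet', Matrix.one_mulVec]
  have huu : u ⬝ᵥ (covOf m y (S.erase j)) *ᵥ u = q := by rw [hSu, hux]
  have hcs : (u ⬝ᵥ x)^2 ≤ (u ⬝ᵥ (covOf m y S) *ᵥ u) * (x ⬝ᵥ (covOf m y S)⁻¹ *ᵥ x) :=
    cs_posdef hpd u x
  have hxb : x ⬝ᵥ (covOf m y S)⁻¹ *ᵥ x ≤ lam := hgood i hiS
  have hA : (1 - lam / m) * (u ⬝ᵥ (covOf m y S) *ᵥ u) ≤ q := by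
    have := hconq u; rwa [huu] at this
  have hnnu : 0 ≤ u ⬝ᵥ (covOf m y S) *ᵥ u := hnnS u
  have hB : q^2 ≤ (u ⬝ᵥ (covOf m y S) *ᵥ u) * lam := by
    rw [← hux]
    exact hcs.trans (mul_le_mul_of_nonneg_left hxb hnnu)
  have hcq2 : (1 - lam / m) * q^2 ≤ q * lam := by
    calc (1 - lam / m) * q^2 ≤ (1 - lam / m) * ((u ⬝ᵥ (covOf m y S) *ᵥ u) * lam) := by
          apply mul_le_mul_of_nonneg_left hB; linarith
      _ = ((1 - lam / m) * (u ⬝ᵥ (covOf m y S) *ᵥ u)) * lam := by ring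
      _ ≤ q * lam := mul_le_mul_of_nonneg_right hA hlam.le
  rcases eq_or_lt_of_le hq0 with hq0' | hqpos
  · rw [← hq0']; positivity
  · have hcq : (1 - lam / m) * q ≤ lam := by
      have h := hcq2
      rw [sq] at h
      have := le_of_mul_le_mul_left (by linarith [h] : q * ((1 - lam / m) * q) ≤ q * lam) hqpos
      linarith
    have hE : 2 * (lam / m) + 1 ≤ Real.exp (2 * lam / m) := by
      have := Real.add_one_le_exp (2 * lam / m)
      rw [mul_div_assoc] at this ⊢
      linarith
    nlinarith [mul_le_mul_of_nonneg_left hcq (by linarith : (0:ℝ) ≤ 1 + 2 * (lam / m)),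
      mul_le_mul_of_nonneg_right hE hlam.le,
      mul_pos hqpos hs0, mul_pos (mul_pos hqpos hs0) hs0]
end

section
/- Let λ > 0 and let y, y' ∈ (ℝ^d)^m be datasets differing in exactly one index. Let w be a λ-good weighting for y and v a λ-good weighting for y' with ‖w − v‖₁ ≤ ρ and ‖w‖_∞, ‖v‖_∞ ≤ η. Set γ = λ(ρ + 2η) and let Σ_w = ∑_i w_i y_i y_iᵀ, Σ_v = ∑_i v_i y'_i (y'_i)ᵀ. Then Σ_w and Σ_v are positive definite and (1 − γ)Σ_w ⪯ Σ_v ⪯ (1/(1 − γ))Σ_w. -/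
open Matrix BigOperators

/-- Weighted covariance `Σ_w = ∑_i w_i y_i y_iᵀ`. -/
noncomputable def wcov {d m : ℕ} (y : Fin m → Fin d → ℝ) (w : Fin m → ℝ) :
    Matrix (Fin d) (Fin d) ℝ :=
  ∑ i, w i • Matrix.vecMulVec (y i) (y i)

/-- `w ∈ [0,1]^m` is a λ-good weighting of `y`: `Σ_w` is positive definite and
`‖Σ_w^{-1/2} y_i‖² ≤ λ` for every `i` in the support of `w`. -/
def IsGoodWeighting {d m : ℕ} (y : Fin m → Fin d → ℝ) (lam : ℝ) (w : Fin m → ℝ) : Prop :=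
  (∀ i, 0 ≤ w i ∧ w i ≤ 1) ∧ (wcov y w).PosDef ∧
    ∀ i, w i ≠ 0 → y i ⬝ᵥ (wcov y w)⁻¹ *ᵥ y i ≤ lam

lemma vecMulVec_mulVec' {d : ℕ} (a b x : Fin d → ℝ) :
    Matrix.vecMulVec a b *ᵥ x = (b ⬝ᵥ x) • a := by
  ext j
  simp only [Matrix.vecMulVec, Matrix.mulVec, dotProduct, Matrix.of_apply,
    Pi.smul_apply, smul_eq_mul]
  rw [Finset.sum_mul]
  exact Finset.sum_congr rfl fun k _ => by ring

lemma sum_mulVec' {d m : ℕ} (M : Fin m → Matrix (Fin d) (Fin d) ℝ) (x : Fin d → ℝ) :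
    (∑ i, M i) *ᵥ x = ∑ i, M i *ᵥ x := by
  ext j
  simp only [Matrix.mulVec, dotProduct, Finset.sum_apply, Matrix.sum_apply,
    Finset.sum_mul]
  rw [Finset.sum_comm]

lemma dotProduct_sum' {d m : ℕ} (x : Fin d → ℝ) (f : Fin m → Fin d → ℝ) :
    x ⬝ᵥ (∑ i, f i) = ∑ i, x ⬝ᵥ f i := by
  simp only [dotProduct, Finset.sum_apply, Finset.mul_sum]
  rw [Finset.sum_comm]

lemma qform_wcov {d m : ℕ} (y : Fin m → Fin d → ℝ) (w : Fin m → ℝ) (x : Fin d → ℝ) :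
    x ⬝ᵥ wcov y w *ᵥ x = ∑ i, w i * (y i ⬝ᵥ x)^2 := by
  rw [wcov, sum_mulVec', dotProduct_sum']
  refine Finset.sum_congr rfl fun i _ => ?_
  rw [Matrix.smul_mulVec, vecMulVec_mulVec', dotProduct_smul,
    dotProduct_smul]
  simp only [smul_eq_mul, dotProduct_comm x (y i), sq]

lemma symm_dot {d : ℕ} {B : Matrix (Fin d) (Fin d) ℝ} (hB : B.IsHermitian) (a b : Fin d → ℝ) :
    b ⬝ᵥ B *ᵥ a = a ⬝ᵥ B *ᵥ b := by
  have ht : Bᵀ = B := by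
    have := hB.eq
    rwa [Matrix.conjTranspose_eq_transpose_of_trivial] at this
  rw [Matrix.dotProduct_mulVec, ← Matrix.mulVec_transpose, ht, dotProduct_comm]

lemma cs_psd {d : ℕ} {B : Matrix (Fin d) (Fin d) ℝ} (hB : B.PosSemidef)
    (a b : Fin d → ℝ) :
    (a ⬝ᵥ B *ᵥ b)^2 ≤ (a ⬝ᵥ B *ᵥ a) * (b ⬝ᵥ B *ᵥ b) := by
  have key : ∀ t : ℝ, 0 ≤ (b ⬝ᵥ B *ᵥ b) * (t * t) + (2 * (a ⬝ᵥ B *ᵥ b)) * t + (a ⬝ᵥ B *ᵥ a) := by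
    intro t
    have h0 := hB.dotProduct_mulVec_nonneg (a + t • b)
    simp only [star_trivial] at h0
    rw [Matrix.mulVec_add, Matrix.mulVec_smul] at h0
    simp only [add_dotProduct, dotProduct_add, smul_dotProduct,
      dotProduct_smul, smul_eq_mul] at h0
    rw [symm_dot hB.1 a b] at h0
    nlinarith [h0]
  have hd := discrim_le_zero key
  rw [discrim] at hd
  nlinarith [hd]

lemma key_bound {d : ℕ} {A : Matrix (Fin d) (Fin d) ℝ} (hA : A.PosDef)
    {a : Fin d → ℝ} {lam : ℝ} (ha : a ⬝ᵥ A⁻¹ *ᵥ a ≤ lam) (x : Fin d → ℝ) :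
    (a ⬝ᵥ x)^2 ≤ lam * (x ⬝ᵥ A *ᵥ x) := by
  have hinv : A⁻¹ * A = 1 := Matrix.nonsing_inv_mul A hA.det_pos.ne'.isUnit
  have hcs := cs_psd hA.inv.posSemidef a (A *ᵥ x)
  rw [Matrix.mulVec_mulVec, hinv, Matrix.one_mulVec] at hcs
  have h2 : (A *ᵥ x) ⬝ᵥ x = x ⬝ᵥ A *ᵥ x := dotProduct_comm _ _
  rw [h2] at hcs
  have hq : 0 ≤ x ⬝ᵥ A *ᵥ x := by
    have := hA.posSemidef.dotProduct_mulVec_nonneg x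
    simpa using this
  calc (a ⬝ᵥ x)^2 ≤ (a ⬝ᵥ A⁻¹ *ᵥ a) * (x ⬝ᵥ A *ᵥ x) := hcs
    _ ≤ lam * (x ⬝ᵥ A *ᵥ x) := mul_le_mul_of_nonneg_right ha hq

lemma wcov_herm {d m : ℕ} (y : Fin m → Fin d → ℝ) (w : Fin m → ℝ) :
    (wcov y w).IsHermitian := by
  show (wcov y w)ᴴ = wcov y w
  ext i j
  simp [wcov, Matrix.conjTranspose_apply, Matrix.sum_apply, Matrix.vecMulVec, mul_comm,
    mul_left_comm]

lemma herm_smul {d : ℕ} {M : Matrix (Fin d) (Fin d) ℝ} (hM : M.IsHermitian) (c : ℝ) :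
    (c • M).IsHermitian := by
  show (c • M)ᴴ = c • M
  rw [Matrix.conjTranspose_smul, hM.eq, star_trivial]

lemma qform_compare {d m : ℕ} (y y' : Fin m → Fin d → ℝ) (i₀ : Fin m)
    (hadj : ∀ i, i ≠ i₀ → y i = y' i)
    (lam ρ η : ℝ) (hlam : 0 < lam)
    (w v : Fin m → ℝ)
    (hw : IsGoodWeighting y lam w) (hv0 : ∀ i, 0 ≤ v i)
    (hρ : ∑ i, |w i - v i| ≤ ρ)
    (hwη : ∀ i, w i ≤ η) (x : Fin d → ℝ) :
    x ⬝ᵥ wcov y w *ᵥ x - x ⬝ᵥ wcov y' v *ᵥ x ≤ lam * (ρ + η) * (x ⬝ᵥ wcov y w *ᵥ x) := by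
  set s := x ⬝ᵥ wcov y w *ᵥ x with hs
  have hs0 : 0 ≤ s := by
    have := hw.2.1.posSemidef.dotProduct_mulVec_nonneg x; simpa using this
  have hη0 : (0:ℝ) ≤ η := le_trans (hw.1 i₀).1 (hwη i₀)
  have hkey : ∀ i, w i ≠ 0 → (y i ⬝ᵥ x)^2 ≤ lam * s :=
    fun i hi => key_bound hw.2.1 (hw.2.2 i hi) x
  have hterm : ∀ i : Fin m,
      w i * (y i ⬝ᵥ x)^2 - v i * (y' i ⬝ᵥ x)^2 ≤
        (if i = i₀ then lam * η * s else lam * |w i - v i| * s) := by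
    intro i
    by_cases hi : i = i₀
    · rw [if_pos hi]
      subst hi
      have hv0' : 0 ≤ v i * (y' i ⬝ᵥ x)^2 := mul_nonneg (hv0 i) (sq_nonneg _)
      by_cases h0 : w i = 0
      · rw [h0, zero_mul]
        have : (0:ℝ) ≤ lam * η * s := mul_nonneg (mul_nonneg hlam.le hη0) hs0
        linarith
      · have hk := hkey i h0
        have h1 : w i * (y i ⬝ᵥ x)^2 ≤ η * (lam * s) := by
          calc w i * (y i ⬝ᵥ x)^2 ≤ w i * (lam * s) :=
                mul_le_mul_of_nonneg_left hk (hw.1 i).1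
            _ ≤ η * (lam * s) := by
                apply mul_le_mul_of_nonneg_right (hwη i)
                exact mul_nonneg hlam.le hs0
        nlinarith
    · rw [if_neg hi, ← hadj i hi]
      by_cases hwv : w i ≤ v i
      · have h1 : w i * (y i ⬝ᵥ x)^2 - v i * (y i ⬝ᵥ x)^2 ≤ 0 := by
          nlinarith [sq_nonneg (y i ⬝ᵥ x)]
        have h2 : (0:ℝ) ≤ lam * |w i - v i| * s :=
          mul_nonneg (mul_nonneg hlam.le (abs_nonneg _)) hs0
        linarith
      · push_neg at hwv
        have hpos : 0 < w i - v i := sub_pos.mpr hwv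
        have h0 : w i ≠ 0 := by
          have := hv0 i; intro h; rw [h] at hwv; linarith
        have hk := hkey i h0
        rw [abs_of_pos hpos]
        nlinarith [mul_le_mul_of_nonneg_left hk hpos.le, sq_nonneg (y i ⬝ᵥ x)]
  have hsum := Finset.sum_le_sum fun i (_ : i ∈ Finset.univ) => hterm i
  have hLHS : ∑ i, (w i * (y i ⬝ᵥ x)^2 - v i * (y' i ⬝ᵥ x)^2)
      = x ⬝ᵥ wcov y w *ᵥ x - x ⬝ᵥ wcov y' v *ᵥ x := by
    rw [Finset.sum_sub_distrib, qform_wcov, qform_wcov]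
  have hsub : ∑ i ∈ Finset.univ \ {i₀}, |w i - v i| ≤ ρ :=
    le_trans (Finset.sum_le_sum_of_subset_of_nonneg (Finset.sdiff_subset)
      (fun i _ _ => abs_nonneg _)) hρ
  have hRHS : ∑ i, (if i = i₀ then lam * η * s else lam * |w i - v i| * s)
      ≤ lam * (ρ + η) * s := by
    rw [Finset.sum_eq_sum_sdiff_singleton_add (Finset.mem_univ i₀)]
    rw [if_pos rfl]
    have he : ∑ i ∈ Finset.univ \ {i₀}, (if i = i₀ then lam * η * s else lam * |w i - v i| * s)
        = lam * s * ∑ i ∈ Finset.univ \ {i₀}, |w i - v i| := by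
      rw [Finset.mul_sum]
      refine Finset.sum_congr rfl fun i hi => ?_
      rw [if_neg (by simp at hi; exact hi)]
      ring
    rw [he]
    nlinarith [mul_le_mul_of_nonneg_left hsub (mul_nonneg hlam.le hs0)]
  rw [hLHS] at hsum
  exact le_trans hsum hRHS

/-- Identifiability for good weightings on adjacent datasets: the weighted covariances
are positive definite and multiplicatively close in the Loewner order. -/
theorem good_weightings_loewner_close
    {d m : ℕ} (y y' : Fin m → Fin d → ℝ) (i₀ : Fin m)
    (hadj : ∀ i, i ≠ i₀ → y i = y' i)
    (lam ρ η : ℝ) (hlam : 0 < lam)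
    (w v : Fin m → ℝ)
    (hw : IsGoodWeighting y lam w) (hv : IsGoodWeighting y' lam v)
    (hρ : ∑ i, |w i - v i| ≤ ρ)
    (hwη : ∀ i, w i ≤ η) (hvη : ∀ i, v i ≤ η)
    (hγ : lam * (ρ + 2 * η) < 1) :
    (wcov y w).PosDef ∧ (wcov y' v).PosDef ∧
    (wcov y' v - (1 - lam * (ρ + 2 * η)) • wcov y w).PosSemidef ∧
    ((1 / (1 - lam * (ρ + 2 * η))) • wcov y w - wcov y' v).PosSemidef := by
  have hρ' : ∑ i, |v i - w i| ≤ ρ := by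
    simpa only [abs_sub_comm] using hρ
  have hη0 : (0:ℝ) ≤ η := le_trans (hw.1 i₀).1 (hwη i₀)
  have hρ0 : (0:ℝ) ≤ ρ := le_trans (Finset.sum_nonneg fun i _ => abs_nonneg _) hρ
  refine ⟨hw.2.1, hv.2.1, ?_, ?_⟩
  · refine Matrix.PosSemidef.of_dotProduct_mulVec_nonneg ?_ ?_
    · exact (wcov_herm y' v).sub (herm_smul (wcov_herm y w) _)
    · intro x
      simp only [star_trivial]
      rw [Matrix.sub_mulVec, Matrix.smul_mulVec, dotProduct_sub,
        dotProduct_smul, smul_eq_mul]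
      have hc := qform_compare y y' i₀ hadj lam ρ η hlam w v hw
        (fun i => (hv.1 i).1) hρ hwη x
      have hs0 : 0 ≤ x ⬝ᵥ wcov y w *ᵥ x := by
        have := hw.2.1.posSemidef.dotProduct_mulVec_nonneg x; simpa using this
      nlinarith [mul_nonneg (mul_nonneg hlam.le hη0) hs0]
  · refine Matrix.PosSemidef.of_dotProduct_mulVec_nonneg ?_ ?_
    · exact (herm_smul (wcov_herm y w) _).sub (wcov_herm y' v)
    · intro x
      simp only [star_trivial]
      rw [Matrix.sub_mulVec, Matrix.smul_mulVec, dotProduct_sub,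
        dotProduct_smul, smul_eq_mul]
      have hc := qform_compare y' y i₀ (fun i hi => (hadj i hi).symm) lam ρ η hlam v w hv
        (fun i => (hw.1 i).1) hρ' hvη x
      have ht0 : 0 ≤ x ⬝ᵥ wcov y' v *ᵥ x := by
        have := hv.2.1.posSemidef.dotProduct_mulVec_nonneg x; simpa using this
      have hγ' : (0:ℝ) < 1 - lam * (ρ + 2 * η) := by linarith
      have hd : (1 / (1 - lam * (ρ + 2 * η))) * (x ⬝ᵥ wcov y w *ᵥ x)
          = (x ⬝ᵥ wcov y w *ᵥ x) / (1 - lam * (ρ + 2 * η)) := by ring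
      rw [sub_nonneg, hd, le_div_iff₀ hγ']
      nlinarith [mul_nonneg (mul_nonneg hlam.le hη0) ht0]
end

section
/- Under the hypotheses of the identifiability lemma for good weightings (adjacent datasets y, y', λ-good weightings w, v with ‖w − v‖₁ ≤ ρ, ‖w‖_∞, ‖v‖_∞ ≤ η, and γ = λ(ρ + 2η) ≤ 1/2), the trace-norm bounds ‖Σ_v^{-1/2} Σ_w Σ_v^{-1/2} − I‖_tr ≤ (1 + 2γ)γ and ‖Σ_w^{-1/2} Σ_v Σ_w^{-1/2} − I‖_tr ≤ (1 + 2γ)γ hold, where ‖·‖_tr denotes the sum of singular values (trace norm). -/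
open Matrix BigOperators
open scoped Classical

/-- The positive-semidefinite square root of a matrix (junk value `0` if the matrix is
not positive semidefinite). -/
noncomputable def psdSqrt {d : ℕ} (M : Matrix (Fin d) (Fin d) ℝ) :
    Matrix (Fin d) (Fin d) ℝ :=
  if h : M.PosSemidef then
    (h.1.eigenvectorUnitary : Matrix (Fin d) (Fin d) ℝ) *
      Matrix.diagonal (fun i => Real.sqrt (h.1.eigenvalues i)) *
      (star h.1.eigenvectorUnitary : Matrix (Fin d) (Fin d) ℝ)
  else 0

/-- The trace norm (sum of absolute values of eigenvalues) of a Hermitian matrix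
(junk value `0` otherwise). -/
noncomputable def traceNorm {d : ℕ} (M : Matrix (Fin d) (Fin d) ℝ) : ℝ :=
  if h : M.IsHermitian then ∑ i, |h.eigenvalues i| else 0

variable {d : ℕ}

lemma sum_dot_eigenbasis {X : Matrix (Fin d) (Fin d) ℝ} (hX : X.IsHermitian)
    (Y : Matrix (Fin d) (Fin d) ℝ) :
    ∑ i, (⇑(hX.eigenvectorBasis i) ⬝ᵥ Y *ᵥ ⇑(hX.eigenvectorBasis i)) = Y.trace := by
  set U : Matrix (Fin d) (Fin d) ℝ := (hX.eigenvectorUnitary : Matrix (Fin d) (Fin d) ℝ) with hUdef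
  have hU : U * star U = 1 := (Matrix.mem_unitaryGroup_iff).mp hX.eigenvectorUnitary.2
  have key : ∀ j, (star U * Y * U) j j = (⇑(hX.eigenvectorBasis j) ⬝ᵥ Y *ᵥ ⇑(hX.eigenvectorBasis j)) := by
    intro j
    simp only [Matrix.mul_apply, Matrix.star_apply, star_trivial, dotProduct,
      Matrix.mulVec, hUdef, Matrix.IsHermitian.eigenvectorUnitary_apply, Finset.sum_mul,
      Finset.mul_sum]
    rw [Finset.sum_comm]
    congr 1; ext i; congr 1; ext k; ring
  calc ∑ i, (⇑(hX.eigenvectorBasis i) ⬝ᵥ Y *ᵥ ⇑(hX.eigenvectorBasis i))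
      = (star U * Y * U).trace := by rw [Matrix.trace]; exact (Finset.sum_congr rfl fun j _ => (key j).symm)
    _ = Y.trace := by rw [Matrix.trace_mul_cycle, hU, Matrix.one_mul]

lemma trace_vecMulVec_mul (z : Fin d → ℝ) (Y : Matrix (Fin d) (Fin d) ℝ) :
    (Matrix.vecMulVec z z * Y).trace = z ⬝ᵥ Y *ᵥ z := by
  simp only [Matrix.trace, Matrix.diag, Matrix.mul_apply, Matrix.vecMulVec_apply,
    dotProduct, Matrix.mulVec, Finset.mul_sum]
  rw [Finset.sum_comm]
  congr 1; ext i; congr 1; ext j; ring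

lemma quad_expand {X : Matrix (Fin d) (Fin d) ℝ} (hX : X.IsHermitian)
    {Y : Matrix (Fin d) (Fin d) ℝ} {μ : Fin d → ℝ}
    (h : ∀ i, Y *ᵥ ⇑(hX.eigenvectorBasis i) = μ i • ⇑(hX.eigenvectorBasis i))
    (z : Fin d → ℝ) :
    z ⬝ᵥ Y *ᵥ z = ∑ i, μ i * (⇑(hX.eigenvectorBasis i) ⬝ᵥ z) ^ 2 := by
  rw [← trace_vecMulVec_mul, ← sum_dot_eigenbasis hX]
  refine Finset.sum_congr rfl fun i _ => ?_
  rw [← Matrix.mulVec_mulVec, h i]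
  simp only [Matrix.mulVec_smul, dotProduct_smul, smul_eq_mul]
  have : Matrix.vecMulVec z z *ᵥ ⇑(hX.eigenvectorBasis i)
      = (z ⬝ᵥ ⇑(hX.eigenvectorBasis i)) • z := by
    ext k
    simp [Matrix.mulVec, Matrix.vecMulVec_apply, dotProduct, Finset.mul_sum, mul_comm,
      mul_left_comm, mul_assoc]
  rw [this]
  simp only [dotProduct_smul, smul_eq_mul]
  have hc : ⇑(hX.eigenvectorBasis i) ⬝ᵥ z = z ⬝ᵥ ⇑(hX.eigenvectorBasis i) :=
    dotProduct_comm _ _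
  rw [hc]; ring

lemma dot_self_eigenbasis {X : Matrix (Fin d) (Fin d) ℝ} (hX : X.IsHermitian) (i : Fin d) :
    ⇑(hX.eigenvectorBasis i) ⬝ᵥ ⇑(hX.eigenvectorBasis i) = 1 := by
  have h := hX.eigenvectorBasis.orthonormal.1 i
  have : (inner ℝ (hX.eigenvectorBasis i) (hX.eigenvectorBasis i) : ℝ) = 1 := by
    rw [real_inner_self_eq_norm_sq, h]; norm_num
  rw [PiLp.inner_apply] at this
  simpa only [RCLike.inner_apply, conj_trivial, dotProduct] using this

lemma psd_dot {P : Matrix (Fin d) (Fin d) ℝ} (hP : P.PosSemidef) (x : Fin d → ℝ) :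
    0 ≤ x ⬝ᵥ P *ᵥ x := by simpa using hP.dotProduct_mulVec_nonneg x

lemma eig_dot {X : Matrix (Fin d) (Fin d) ℝ} (hX : X.IsHermitian) (i : Fin d) :
    ⇑(hX.eigenvectorBasis i) ⬝ᵥ X *ᵥ ⇑(hX.eigenvectorBasis i) = hX.eigenvalues i := by
  rw [hX.mulVec_eigenvectorBasis, dotProduct_smul, smul_eq_mul,
    dot_self_eigenbasis hX i, mul_one]

lemma trace_eq_sum_eig {X : Matrix (Fin d) (Fin d) ℝ} (hX : X.IsHermitian) :
    X.trace = ∑ i, hX.eigenvalues i := by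
  rw [← sum_dot_eigenbasis hX X]
  exact Finset.sum_congr rfl fun i _ => eig_dot hX i

lemma parseval_dot {X : Matrix (Fin d) (Fin d) ℝ} (hX : X.IsHermitian) (z : Fin d → ℝ) :
    z ⬝ᵥ z = ∑ i, (⇑(hX.eigenvectorBasis i) ⬝ᵥ z) ^ 2 := by
  have h : ∀ i, (1 : Matrix (Fin d) (Fin d) ℝ) *ᵥ ⇑(hX.eigenvectorBasis i)
      = (1 : ℝ) • ⇑(hX.eigenvectorBasis i) := by simp [Matrix.one_mulVec]
  simpa [Matrix.one_mulVec] using quad_expand hX h z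

lemma traceNorm_sub_le {P N : Matrix (Fin d) (Fin d) ℝ}
    (hP : P.PosSemidef) (hN : N.PosSemidef) :
    traceNorm (P - N) ≤ P.trace + N.trace := by
  have hX : (P - N).IsHermitian := hP.1.sub hN.1
  have hrw : traceNorm (P - N) = ∑ i, |hX.eigenvalues i| := by
    rw [traceNorm, dif_pos hX]
  rw [hrw]
  calc ∑ i, |hX.eigenvalues i|
      ≤ ∑ i, ((⇑(hX.eigenvectorBasis i) ⬝ᵥ P *ᵥ ⇑(hX.eigenvectorBasis i))
          + (⇑(hX.eigenvectorBasis i) ⬝ᵥ N *ᵥ ⇑(hX.eigenvectorBasis i))) := by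
        refine Finset.sum_le_sum fun i _ => ?_
        have he := eig_dot hX i
        have hsub : ⇑(hX.eigenvectorBasis i) ⬝ᵥ (P - N) *ᵥ ⇑(hX.eigenvectorBasis i)
            = (⇑(hX.eigenvectorBasis i) ⬝ᵥ P *ᵥ ⇑(hX.eigenvectorBasis i))
              - (⇑(hX.eigenvectorBasis i) ⬝ᵥ N *ᵥ ⇑(hX.eigenvectorBasis i)) := by
          rw [Matrix.sub_mulVec, dotProduct_sub]
        have h1 := psd_dot hP (⇑(hX.eigenvectorBasis i))
        have h2 := psd_dot hN (⇑(hX.eigenvectorBasis i))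
        rw [← he, hsub]
        rw [abs_le]
        constructor <;> linarith
    _ = P.trace + N.trace := by
        rw [Finset.sum_add_distrib, sum_dot_eigenbasis hX P, sum_dot_eigenbasis hX N]

lemma psd_quad_le_trace {P : Matrix (Fin d) (Fin d) ℝ} (hP : P.PosSemidef) (x : Fin d → ℝ) :
    x ⬝ᵥ P *ᵥ x ≤ P.trace * (x ⬝ᵥ x) := by
  rw [quad_expand hP.1 hP.1.mulVec_eigenvectorBasis x, trace_eq_sum_eig hP.1,
    Finset.sum_mul]
  refine Finset.sum_le_sum fun i _ => ?_
  have h1 : 0 ≤ hP.1.eigenvalues i := hP.eigenvalues_nonneg i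
  have h2 : (⇑(hP.1.eigenvectorBasis i) ⬝ᵥ x) ^ 2 ≤ x ⬝ᵥ x := by
    rw [parseval_dot hP.1 x]
    exact Finset.single_le_sum (f := fun j => (⇑(hP.1.eigenvectorBasis j) ⬝ᵥ x) ^ 2)
      (fun j _ => sq_nonneg _) (Finset.mem_univ i)
  exact mul_le_mul_of_nonneg_left h2 h1

lemma inv_quad_le {M : Matrix (Fin d) (Fin d) ℝ} (hM : M.PosDef) {c : ℝ} (hc : 0 < c)
    (h : ∀ x : Fin d → ℝ, c * (x ⬝ᵥ x) ≤ x ⬝ᵥ M *ᵥ x) (z : Fin d → ℝ) :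
    z ⬝ᵥ M⁻¹ *ᵥ z ≤ c⁻¹ * (z ⬝ᵥ z) := by
  have hX := hM.1
  have heigc : ∀ i, c ≤ hX.eigenvalues i := by
    intro i
    have := h (⇑(hX.eigenvectorBasis i))
    rwa [dot_self_eigenbasis hX i, mul_one, eig_dot hX i] at this
  have hinv : ∀ i, M⁻¹ *ᵥ ⇑(hX.eigenvectorBasis i)
      = (hX.eigenvalues i)⁻¹ • ⇑(hX.eigenvectorBasis i) := by
    intro i
    have hpos : 0 < hX.eigenvalues i := lt_of_lt_of_le hc (heigc i)
    have hMu := hX.mulVec_eigenvectorBasis i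
    have hdet : IsUnit M.det := isUnit_iff_ne_zero.mpr hM.det_pos.ne'
    have key : M⁻¹ *ᵥ (M *ᵥ ⇑(hX.eigenvectorBasis i)) = ⇑(hX.eigenvectorBasis i) := by
      rw [Matrix.mulVec_mulVec, Matrix.nonsing_inv_mul _ hdet, Matrix.one_mulVec]
    rw [hMu, Matrix.mulVec_smul] at key
    calc M⁻¹ *ᵥ ⇑(hX.eigenvectorBasis i)
        = (hX.eigenvalues i)⁻¹ • (hX.eigenvalues i • (M⁻¹ *ᵥ ⇑(hX.eigenvectorBasis i))) := by
          rw [smul_smul, inv_mul_cancel₀ hpos.ne', one_smul]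
      _ = (hX.eigenvalues i)⁻¹ • ⇑(hX.eigenvectorBasis i) := by rw [key]
  rw [quad_expand hX hinv z, parseval_dot hX z, Finset.mul_sum]
  refine Finset.sum_le_sum fun i _ => ?_
  have hpos : 0 < hX.eigenvalues i := lt_of_lt_of_le hc (heigc i)
  exact mul_le_mul_of_nonneg_right (by
    exact (inv_le_inv₀ hpos hc).mpr (heigc i)) (sq_nonneg _)

lemma psd_trace_nonneg {P : Matrix (Fin d) (Fin d) ℝ} (hP : P.PosSemidef) : 0 ≤ P.trace := by
  rw [trace_eq_sum_eig hP.1]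
  exact Finset.sum_nonneg fun i _ => hP.eigenvalues_nonneg i

lemma psdSqrt_facts {P : Matrix (Fin d) (Fin d) ℝ} (hP : P.PosSemidef) :
    (psdSqrt P).PosSemidef ∧ psdSqrt P * psdSqrt P = P := by
  have hdef : psdSqrt P = (hP.1.eigenvectorUnitary : Matrix (Fin d) (Fin d) ℝ) *
      Matrix.diagonal (fun i => Real.sqrt (hP.1.eigenvalues i)) *
      (star hP.1.eigenvectorUnitary : Matrix (Fin d) (Fin d) ℝ) := dif_pos hP
  have hUU : (star hP.1.eigenvectorUnitary : Matrix (Fin d) (Fin d) ℝ) *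
      (hP.1.eigenvectorUnitary : Matrix (Fin d) (Fin d) ℝ) = 1 := Unitary.coe_star_mul_self _
  have hst : (star hP.1.eigenvectorUnitary : Matrix (Fin d) (Fin d) ℝ) =
      (hP.1.eigenvectorUnitary : Matrix (Fin d) (Fin d) ℝ)ᴴ := by
    exact Matrix.star_eq_conjTranspose _
  constructor
  · rw [hdef, hst]
    exact (PosSemidef.diagonal (fun i => Real.sqrt_nonneg _)).mul_mul_conjTranspose_same _
  · rw [hdef]
    conv_rhs => rw [hP.1.spectral_theorem, Unitary.conjStarAlgAut_apply]
    calc _ = (hP.1.eigenvectorUnitary : Matrix (Fin d) (Fin d) ℝ) *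
          Matrix.diagonal (fun i => Real.sqrt (hP.1.eigenvalues i)) *
          ((star hP.1.eigenvectorUnitary : Matrix (Fin d) (Fin d) ℝ) *
          (hP.1.eigenvectorUnitary : Matrix (Fin d) (Fin d) ℝ)) *
          Matrix.diagonal (fun i => Real.sqrt (hP.1.eigenvalues i)) *
          (star hP.1.eigenvectorUnitary : Matrix (Fin d) (Fin d) ℝ) := by
            simp only [Matrix.mul_assoc]
      _ = _ := by
        rw [hUU, Matrix.mul_one, Matrix.mul_assoc _ (Matrix.diagonal _) (Matrix.diagonal _),
          Matrix.diagonal_mul_diagonal]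
        congr 3
        ext i
        simp [Real.mul_self_sqrt (hP.eigenvalues_nonneg i)]

lemma trace_mul_nonneg {P Q : Matrix (Fin d) (Fin d) ℝ}
    (hP : P.PosSemidef) (hQ : Q.PosSemidef) : 0 ≤ (P * Q).trace := by
  have h1 : P = psdSqrt P * psdSqrt P := (psdSqrt_facts hP).2.symm
  have h2 : (P * Q).trace = (psdSqrt P * Q * psdSqrt P).trace := by
    rw [Matrix.trace_mul_cycle, ← h1]
  rw [h2]
  have h3 : (psdSqrt P * Q * psdSqrt P).PosSemidef := by
    have := hQ.mul_mul_conjTranspose_same (psdSqrt P)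
    rwa [(psdSqrt_facts hP).1.1] at this
  exact psd_trace_nonneg h3

lemma dot_mulVec_symm {T : Matrix (Fin d) (Fin d) ℝ} (hT : T.IsHermitian)
    (x y : Fin d → ℝ) : (T *ᵥ x) ⬝ᵥ y = x ⬝ᵥ (T *ᵥ y) := by
  simp only [dotProduct, Matrix.mulVec, Finset.sum_mul, Finset.mul_sum]
  rw [Finset.sum_comm]
  refine Finset.sum_congr rfl fun i _ => Finset.sum_congr rfl fun j _ => ?_
  have : T j i = T i j := by
    conv_lhs => rw [← hT]
    simp [Matrix.conjTranspose_apply]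
  rw [this]; ring

lemma sqrt_inv_facts {B : Matrix (Fin d) (Fin d) ℝ} (hB : B.PosDef) :
    (psdSqrt B⁻¹).PosSemidef ∧ psdSqrt B⁻¹ * psdSqrt B⁻¹ = B⁻¹ ∧
      psdSqrt B⁻¹ * B * psdSqrt B⁻¹ = 1 ∧ IsUnit (psdSqrt B⁻¹).det := by
  have hBi : B⁻¹.PosDef := hB.inv
  have hps : (B⁻¹).PosSemidef := hBi.posSemidef
  have h1 : (psdSqrt B⁻¹).PosSemidef := (psdSqrt_facts hps).1
  have h2 : psdSqrt B⁻¹ * psdSqrt B⁻¹ = B⁻¹ := (psdSqrt_facts hps).2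
  have hdetB : IsUnit B.det := isUnit_iff_ne_zero.mpr hB.det_pos.ne'
  have hdet : IsUnit (psdSqrt B⁻¹).det := by
    apply isUnit_iff_ne_zero.mpr
    intro h0
    have hd : (psdSqrt B⁻¹).det * (psdSqrt B⁻¹).det = (B⁻¹).det := by
      rw [← Matrix.det_mul, h2]
    rw [h0, mul_zero] at hd
    exact hBi.det_pos.ne (hd)
  have e1 : psdSqrt B⁻¹ * (psdSqrt B⁻¹ * B) = 1 := by
    rw [← Matrix.mul_assoc, h2, Matrix.nonsing_inv_mul _ hdetB]
  have e2 : psdSqrt B⁻¹ * B * psdSqrt B⁻¹ = 1 := by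
    exact mul_eq_one_comm.mp e1
  exact ⟨h1, h2, e2, hdet⟩

lemma key_lemma {A B P N : Matrix (Fin d) (Fin d) ℝ}
    (hA : A.PosDef) (hB : B.PosDef) (hP : P.PosSemidef) (hN : N.PosSemidef)
    (hAB : A = B + P - N) {a b γ : ℝ}
    (ha : (psdSqrt A⁻¹ * P * psdSqrt A⁻¹).trace ≤ a)
    (hb : (psdSqrt B⁻¹ * N * psdSqrt B⁻¹).trace ≤ b)
    (hab : a + b ≤ γ) (hγ : γ ≤ 1 / 2) :
    traceNorm (psdSqrt B⁻¹ * A * psdSqrt B⁻¹ - 1) ≤ (1 + 2 * γ) * γ := by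
  set T := psdSqrt A⁻¹ with hTdef
  set S := psdSqrt B⁻¹ with hSdef
  obtain ⟨hTps, hTT, hTAT, hTdet⟩ := sqrt_inv_facts hA
  obtain ⟨hSps, hSS, hSBS, hSdet⟩ := sqrt_inv_facts hB
  have hTherm : T.IsHermitian := hTps.1
  have hSherm : S.IsHermitian := hSps.1
  -- conjugated matrices are PSD
  have hTPT : (T * P * T).PosSemidef := by
    have := hP.mul_mul_conjTranspose_same T
    rwa [hTherm] at this
  have hSPS : (S * P * S).PosSemidef := by
    have := hP.mul_mul_conjTranspose_same S
    rwa [hSherm] at this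
  have hSNS : (S * N * S).PosSemidef := by
    have := hN.mul_mul_conjTranspose_same S
    rwa [hSherm] at this
  have ha0 : 0 ≤ a := le_trans (psd_trace_nonneg hTPT) ha
  have hb0 : 0 ≤ b := le_trans (psd_trace_nonneg hSNS) hb
  have haγ : a ≤ γ := by linarith
  have h1a : (0:ℝ) < 1 - a := by linarith
  -- change of variables for quadratic forms
  have hconj : ∀ (M : Matrix (Fin d) (Fin d) ℝ) (x : Fin d → ℝ),
      (T *ᵥ x) ⬝ᵥ M *ᵥ (T *ᵥ x) = x ⬝ᵥ (T * M * T) *ᵥ x := by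
    intro M x
    rw [← Matrix.mulVec_mulVec, ← Matrix.mulVec_mulVec, ← dot_mulVec_symm hTherm]
  have hTsurj : ∀ z : Fin d → ℝ, ∃ x, z = T *ᵥ x := by
    intro z
    exact ⟨T⁻¹ *ᵥ z, by rw [Matrix.mulVec_mulVec, Matrix.mul_nonsing_inv _ hTdet,
      Matrix.one_mulVec]⟩
  -- P ⪯ a A
  have hPA : ∀ z : Fin d → ℝ, z ⬝ᵥ P *ᵥ z ≤ a * (z ⬝ᵥ A *ᵥ z) := by
    intro z
    obtain ⟨x, rfl⟩ := hTsurj z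
    rw [hconj P x, hconj A x, hTAT]
    have h1 : x ⬝ᵥ (T * P * T) *ᵥ x ≤ (T * P * T).trace * (x ⬝ᵥ x) := psd_quad_le_trace hTPT x
    have h2 : (T * P * T).trace * (x ⬝ᵥ x) ≤ a * (x ⬝ᵥ x) :=
      mul_le_mul_of_nonneg_right ha (Finset.sum_nonneg fun i _ => mul_self_nonneg _)
    have h3 : x ⬝ᵥ (1 : Matrix (Fin d) (Fin d) ℝ) *ᵥ x = x ⬝ᵥ x := by
      rw [Matrix.one_mulVec]
    rw [h3]
    exact le_trans h1 h2
  -- B ⪰ (1-a) A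
  have hBA : ∀ z : Fin d → ℝ, (1 - a) * (z ⬝ᵥ A *ᵥ z) ≤ z ⬝ᵥ B *ᵥ z := by
    intro z
    have hBeq : B = A - P + N := by rw [hAB]; abel
    have : z ⬝ᵥ B *ᵥ z = z ⬝ᵥ A *ᵥ z - z ⬝ᵥ P *ᵥ z + z ⬝ᵥ N *ᵥ z := by
      rw [hBeq, Matrix.add_mulVec, Matrix.sub_mulVec, dotProduct_add,
        dotProduct_sub]
    rw [this]
    have := hPA z
    have := psd_dot hN z
    linarith
  -- B⁻¹ ⪯ (1-a)⁻¹ A⁻¹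
  have hBinvA : ∀ z : Fin d → ℝ, z ⬝ᵥ B⁻¹ *ᵥ z ≤ (1 - a)⁻¹ * (z ⬝ᵥ A⁻¹ *ᵥ z) := by
    set M := T * B * T with hMdef
    have hMherm : M.IsHermitian := by
      have := Matrix.isHermitian_mul_mul_conjTranspose T hB.1
      rwa [hTherm] at this
    have hMpd : M.PosDef := by
      refine Matrix.PosDef.of_dotProduct_mulVec_pos hMherm fun x hx => ?_
      have hTx : T *ᵥ x ≠ 0 := by
        intro h0
        apply hx
        have : T⁻¹ *ᵥ (T *ᵥ x) = x := by
          rw [Matrix.mulVec_mulVec, Matrix.nonsing_inv_mul _ hTdet, Matrix.one_mulVec]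
        rw [← this, h0, Matrix.mulVec_zero]
      have h' : (0:ℝ) < (T *ᵥ x) ⬝ᵥ B *ᵥ (T *ᵥ x) := by simpa using hB.dotProduct_mulVec_pos hTx
      rw [hconj B x, ← hMdef] at h'
      simpa using h'
    have hMquad : ∀ x : Fin d → ℝ, (1 - a) * (x ⬝ᵥ x) ≤ x ⬝ᵥ M *ᵥ x := by
      intro x
      have := hBA (T *ᵥ x)
      rw [hconj B x] at this
      have hAx : (T *ᵥ x) ⬝ᵥ A *ᵥ (T *ᵥ x) = x ⬝ᵥ x := by
        rw [hconj A x, hTAT, Matrix.one_mulVec]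
      rw [hAx] at this
      exact this
    have hMinv := inv_quad_le hMpd h1a hMquad
    intro z
    have hMinvEq : B⁻¹ = T * M⁻¹ * T := by
      have hM1 : M⁻¹ = T⁻¹ * (B⁻¹ * T⁻¹) := by
        rw [hMdef, Matrix.mul_inv_rev, Matrix.mul_inv_rev]
      rw [hM1, ← Matrix.mul_assoc T T⁻¹, Matrix.mul_nonsing_inv _ hTdet, Matrix.one_mul,
        Matrix.mul_assoc, Matrix.nonsing_inv_mul _ hTdet, Matrix.mul_one]
    have h1 : z ⬝ᵥ B⁻¹ *ᵥ z = (T *ᵥ z) ⬝ᵥ M⁻¹ *ᵥ (T *ᵥ z) := by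
      rw [hconj M⁻¹ z, ← hMinvEq]
    have h2 : z ⬝ᵥ A⁻¹ *ᵥ z = (T *ᵥ z) ⬝ᵥ (T *ᵥ z) := by
      rw [← hTT, ← Matrix.mulVec_mulVec, ← dot_mulVec_symm hTherm]
    rw [h1, h2]
    exact hMinv (T *ᵥ z)
  -- trace of S P S
  have hD : ((1 - a)⁻¹ • A⁻¹ - B⁻¹).PosSemidef := by
    refine Matrix.PosSemidef.of_dotProduct_mulVec_nonneg ?_ ?_
    · show ((1 - a)⁻¹ • A⁻¹ - B⁻¹)ᴴ = _
      rw [Matrix.conjTranspose_sub, Matrix.conjTranspose_smul, hA.inv.1, hB.inv.1,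
        star_trivial]
    · intro x
      have := hBinvA x
      simp only [Matrix.sub_mulVec, dotProduct_sub, Matrix.smul_mulVec,
        dotProduct_smul, smul_eq_mul, star_trivial]
      linarith
  have htrSPS : (S * P * S).trace ≤ (1 + 2 * a) * a := by
    have e1 : (S * P * S).trace = (B⁻¹ * P).trace := by
      rw [Matrix.trace_mul_cycle, hSS]
    have e2 : ((( 1 - a)⁻¹ • A⁻¹) * P).trace - (B⁻¹ * P).trace
        = ((((1 - a)⁻¹ • A⁻¹) - B⁻¹) * P).trace := by
      rw [Matrix.sub_mul, Matrix.trace_sub]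
    have e3 : 0 ≤ ((((1 - a)⁻¹ • A⁻¹) - B⁻¹) * P).trace := trace_mul_nonneg hD hP
    have e4 : ((( 1 - a)⁻¹ • A⁻¹) * P).trace = (1 - a)⁻¹ * (A⁻¹ * P).trace := by
      rw [Matrix.smul_mul, Matrix.trace_smul]; rfl
    have e5 : (A⁻¹ * P).trace = (T * P * T).trace := by
      rw [(by rw [Matrix.trace_mul_cycle, hTT] : (T * P * T).trace = (A⁻¹ * P).trace)]
    have e6 : (1 - a)⁻¹ ≤ 1 + 2 * a := by
      have hprod : (1 - a) * (1 - a)⁻¹ = 1 := mul_inv_cancel₀ h1a.ne'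
      nlinarith [inv_nonneg.mpr h1a.le]
    have e7 : (B⁻¹ * P).trace ≤ (1 - a)⁻¹ * a := by
      have := e3
      rw [← e2] at this
      have h8 : (T * P * T).trace ≤ a := ha
      nlinarith [inv_nonneg.mpr h1a.le, e4, e5]
    rw [e1]
    calc (B⁻¹ * P).trace ≤ (1 - a)⁻¹ * a := e7
      _ ≤ (1 + 2 * a) * a := mul_le_mul_of_nonneg_right e6 ha0
  -- decomposition
  have hdecomp : S * A * S - 1 = (S * P * S) - (S * N * S) := by
    rw [hAB]
    rw [Matrix.mul_sub, Matrix.mul_add, Matrix.sub_mul, Matrix.add_mul, hSBS]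
    abel
  rw [hdecomp]
  have := traceNorm_sub_le hSPS hSNS
  have hbd : (S * P * S).trace + (S * N * S).trace ≤ (1 + 2 * a) * a + b := by
    linarith
  have final : (1 + 2 * a) * a + b ≤ (1 + 2 * γ) * γ := by nlinarith
  linarith

lemma max_sub_max (a b : ℝ) : max (a - b) 0 - max (b - a) 0 = a - b := by
  rcases le_total a b with h | h
  · rw [max_eq_right (sub_nonpos.mpr h), max_eq_left (sub_nonneg.mpr h)]; ring
  · rw [max_eq_left (sub_nonneg.mpr h), max_eq_right (sub_nonpos.mpr h)]; ring

lemma max_add_max (a b : ℝ) : max (a - b) 0 + max (b - a) 0 = |a - b| := by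
  rcases le_total a b with h | h
  · rw [max_eq_right (sub_nonpos.mpr h), max_eq_left (sub_nonneg.mpr h),
      abs_of_nonpos (sub_nonpos.mpr h)]; ring
  · rw [max_eq_left (sub_nonneg.mpr h), max_eq_right (sub_nonpos.mpr h),
      abs_of_nonneg (sub_nonneg.mpr h)]; ring

lemma psd_smul_vecMulVec (z : Fin d → ℝ) {c : ℝ} (hc : 0 ≤ c) :
    (c • Matrix.vecMulVec z z).PosSemidef := by
  refine Matrix.PosSemidef.of_dotProduct_mulVec_nonneg ?_ ?_
  · show (c • Matrix.vecMulVec z z)ᴴ = _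
    rw [Matrix.conjTranspose_smul, star_trivial]
    congr 1
    ext i j
    simp [Matrix.conjTranspose_apply, Matrix.vecMulVec_apply, mul_comm]
  · intro x
    have : star x ⬝ᵥ (c • Matrix.vecMulVec z z) *ᵥ x = c * (z ⬝ᵥ x) ^ 2 := by
      simp only [star_trivial, Matrix.smul_mulVec, dotProduct_smul, smul_eq_mul]
      have : Matrix.vecMulVec z z *ᵥ x = (z ⬝ᵥ x) • z := by
        ext k
        simp [Matrix.mulVec, Matrix.vecMulVec_apply, dotProduct, Finset.mul_sum,
          mul_comm, mul_left_comm, mul_assoc]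
      rw [this, dotProduct_smul, smul_eq_mul, dotProduct_comm]
      ring
    rw [this]
    positivity

lemma posSemidef_sum {m : ℕ} (f : Fin m → Matrix (Fin d) (Fin d) ℝ)
    (h : ∀ i, (f i).PosSemidef) : (∑ i, f i).PosSemidef :=
  Finset.sum_induction f _ (fun _ _ ha hb => ha.add hb) Matrix.PosSemidef.zero
    (fun i _ => h i)

/-- Identifiability for good weightings on adjacent datasets: trace-norm bounds on
`Σ_v^{-1/2} Σ_w Σ_v^{-1/2} − I` and `Σ_w^{-1/2} Σ_v Σ_w^{-1/2} − I`. -/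
theorem good_weightings_traceNorm_close
    {d m : ℕ} (y y' : Fin m → Fin d → ℝ) (i₀ : Fin m)
    (hadj : ∀ i, i ≠ i₀ → y i = y' i)
    (lam ρ η γ : ℝ) (hlam : 0 < lam)
    (w v : Fin m → ℝ)
    (hw : IsGoodWeighting y lam w) (hv : IsGoodWeighting y' lam v)
    (hρ : ∑ i, |w i - v i| ≤ ρ)
    (hwη : ∀ i, w i ≤ η) (hvη : ∀ i, v i ≤ η)
    (hγ : γ = lam * (ρ + 2 * η)) (hγhalf : γ ≤ 1 / 2) :
    traceNorm (psdSqrt (wcov y' v)⁻¹ * wcov y w * psdSqrt (wcov y' v)⁻¹ - 1)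
        ≤ (1 + 2 * γ) * γ ∧
    traceNorm (psdSqrt (wcov y w)⁻¹ * wcov y' v * psdSqrt (wcov y w)⁻¹ - 1)
        ≤ (1 + 2 * γ) * γ := by
  obtain ⟨hw01, hApd, hwgood⟩ := hw
  obtain ⟨hv01, hBpd, hvgood⟩ := hv
  set A := wcov y w with hAdef
  set B := wcov y' v with hBdef
  set p : Fin m → ℝ := fun i => if i = i₀ then w i else max (w i - v i) 0 with hpdef
  set q : Fin m → ℝ := fun i => if i = i₀ then v i else max (v i - w i) 0 with hqdef
  have hp0 : ∀ i, 0 ≤ p i := by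
    intro i
    by_cases hi : i = i₀
    · subst hi; simp only [hpdef, if_pos rfl]; exact (hw01 _).1
    · simp [hpdef, hi, le_max_right]
  have hq0 : ∀ i, 0 ≤ q i := by
    intro i
    by_cases hi : i = i₀
    · subst hi; simp only [hqdef, if_pos rfl]; exact (hv01 _).1
    · simp [hqdef, hi, le_max_right]
  set P : Matrix (Fin d) (Fin d) ℝ := ∑ i, p i • Matrix.vecMulVec (y i) (y i) with hPdef
  set N : Matrix (Fin d) (Fin d) ℝ := ∑ i, q i • Matrix.vecMulVec (y' i) (y' i) with hNdef
  have hPpsd : P.PosSemidef :=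
    posSemidef_sum _ fun i => psd_smul_vecMulVec (y i) (hp0 i)
  have hNpsd : N.PosSemidef :=
    posSemidef_sum _ fun i => psd_smul_vecMulVec (y' i) (hq0 i)
  -- decomposition A - B = P - N
  have hd : A - B = P - N := by
    rw [hAdef, hBdef, hPdef, hNdef, wcov, wcov, ← Finset.sum_sub_distrib,
      ← Finset.sum_sub_distrib]
    refine Finset.sum_congr rfl fun i _ => ?_
    by_cases hi : i = i₀
    · subst hi; simp [hpdef, hqdef]
    · rw [hadj i hi]
      simp only [hpdef, hqdef, if_neg hi]
      rw [← sub_smul, ← sub_smul, max_sub_max]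
  have hAB : A = B + P - N := by
    calc A = B + (A - B) := by abel
      _ = B + (P - N) := by rw [hd]
      _ = B + P - N := by abel
  have hBA : B = A + N - P := by
    calc B = A - (A - B) := by abel
      _ = A - (P - N) := by rw [hd]
      _ = A + N - P := by abel
  -- trace bounds
  have htrace : ∀ (C : Matrix (Fin d) (Fin d) ℝ), C.PosDef →
      ∀ z : Fin d → ℝ, (psdSqrt C⁻¹ * Matrix.vecMulVec z z * psdSqrt C⁻¹).trace
        = z ⬝ᵥ C⁻¹ *ᵥ z := by
    intro C hC z
    obtain ⟨_, hCC, _, _⟩ := sqrt_inv_facts hC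
    rw [Matrix.trace_mul_cycle, hCC, Matrix.trace_mul_comm, trace_vecMulVec_mul]
  have hexpand : ∀ (C : Matrix (Fin d) (Fin d) ℝ) (c : Fin m → ℝ)
      (u : Fin m → Fin d → ℝ),
      (psdSqrt C⁻¹ * (∑ i, c i • Matrix.vecMulVec (u i) (u i)) * psdSqrt C⁻¹).trace
        = ∑ i, c i * (psdSqrt C⁻¹ * Matrix.vecMulVec (u i) (u i) * psdSqrt C⁻¹).trace := by
    intro C c u
    rw [Finset.mul_sum, Finset.sum_mul, Matrix.trace_sum]
    refine Finset.sum_congr rfl fun i _ => ?_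
    rw [Matrix.mul_smul, Matrix.smul_mul, Matrix.trace_smul, smul_eq_mul]
  have haP : (psdSqrt A⁻¹ * P * psdSqrt A⁻¹).trace ≤ lam * ∑ i, p i := by
    rw [hPdef, hexpand A p y]
    have hb : ∀ i, p i * (psdSqrt A⁻¹ * Matrix.vecMulVec (y i) (y i) * psdSqrt A⁻¹).trace
        ≤ p i * lam := by
      intro i
      rcases eq_or_ne (p i) 0 with h0 | h0
      · rw [h0, zero_mul, zero_mul]
      · have hwne : w i ≠ 0 := by
          by_cases hi : i = i₀
          · subst hi; simpa [hpdef] using h0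
          · have hmax : max (w i - v i) 0 ≠ 0 := by simpa [hpdef, hi] using h0
            have hpos : 0 < w i - v i := by
              rcases lt_or_ge 0 (w i - v i) with h | h
              · exact h
              · exact absurd (max_eq_right h) hmax
            have := (hv01 i).1
            intro h0'
            rw [h0'] at hpos
            linarith
        rw [htrace A hApd (y i)]
        exact mul_le_mul_of_nonneg_left (hwgood i hwne) (hp0 i)
    calc ∑ i, p i * (psdSqrt A⁻¹ * Matrix.vecMulVec (y i) (y i) * psdSqrt A⁻¹).trace
        ≤ ∑ i, p i * lam := Finset.sum_le_sum fun i _ => hb i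
      _ = lam * ∑ i, p i := by rw [← Finset.sum_mul]; ring
  have hbN : (psdSqrt B⁻¹ * N * psdSqrt B⁻¹).trace ≤ lam * ∑ i, q i := by
    rw [hNdef, hexpand B q y']
    have hb : ∀ i, q i * (psdSqrt B⁻¹ * Matrix.vecMulVec (y' i) (y' i) * psdSqrt B⁻¹).trace
        ≤ q i * lam := by
      intro i
      rcases eq_or_ne (q i) 0 with h0 | h0
      · rw [h0, zero_mul, zero_mul]
      · have hvne : v i ≠ 0 := by
          by_cases hi : i = i₀
          · subst hi; simpa [hqdef] using h0
          · have hmax : max (v i - w i) 0 ≠ 0 := by simpa [hqdef, hi] using h0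
            have hpos : 0 < v i - w i := by
              rcases lt_or_ge 0 (v i - w i) with h | h
              · exact h
              · exact absurd (max_eq_right h) hmax
            have := (hw01 i).1
            intro h0'
            rw [h0'] at hpos
            linarith
        rw [htrace B hBpd (y' i)]
        exact mul_le_mul_of_nonneg_left (hvgood i hvne) (hq0 i)
    calc ∑ i, q i * (psdSqrt B⁻¹ * Matrix.vecMulVec (y' i) (y' i) * psdSqrt B⁻¹).trace
        ≤ ∑ i, q i * lam := Finset.sum_le_sum fun i _ => hb i
      _ = lam * ∑ i, q i := by rw [← Finset.sum_mul]; ring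
  -- budget bound
  have hsum : (∑ i, p i) + (∑ i, q i) ≤ ρ + 2 * η := by
    have h1 : (∑ i, p i) + (∑ i, q i) = ∑ i, (p i + q i) := by
      rw [Finset.sum_add_distrib]
    have h2 : ∑ i, (p i + q i)
        = (w i₀ + v i₀) + ∑ i ∈ Finset.univ.erase i₀, |w i - v i| := by
      rw [← Finset.add_sum_erase _ _ (Finset.mem_univ i₀)]
      congr 1
      · simp [hpdef, hqdef]
      · refine Finset.sum_congr rfl fun i hi => ?_
        have hne : i ≠ i₀ := Finset.ne_of_mem_erase hi
        simp only [hpdef, hqdef, if_neg hne]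
        exact max_add_max _ _
    have h3 : ∑ i ∈ Finset.univ.erase i₀, |w i - v i| ≤ ∑ i, |w i - v i| :=
      Finset.sum_le_sum_of_subset_of_nonneg (Finset.erase_subset _ _)
        (fun i _ _ => abs_nonneg _)
    have h4 := hwη i₀
    have h5 := hvη i₀
    rw [h1, h2]
    linarith
  have hab : (lam * ∑ i, p i) + (lam * ∑ i, q i) ≤ γ := by
    rw [hγ, ← mul_add]
    exact mul_le_mul_of_nonneg_left hsum hlam.le
  constructor
  · exact key_lemma hApd hBpd hPpsd hNpsd hAB haP hbN hab hγhalf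
  · refine key_lemma hBpd hApd hNpsd hPpsd hBA hbN haP ?_ hγhalf
    linarith
end

section
/- Fix m, λ₀ > 0, k ∈ ℕ with k ≤ m/(2e²λ₀). Define g(y) = min{k, min_{0≤ℓ≤k}(m − |S_ℓ(y)| + ℓ)}, where S_ℓ(y) is the largest e^{ℓ/k}λ₀-good subset of y (∅ if none exists). Then for all datasets y, y' ∈ (ℝ^d)^m differing in exactly one index, |g(y) − g(y')| ≤ 2. -/
open Matrix BigOperators

/-- `S` is the largest λ-good subset of `y`: it contains every λ-good subset, and is
itself λ-good (or is `∅` when no λ-good subset exists). -/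
def IsLargestGoodSubset {d m : ℕ} (y : Fin m → Fin d → ℝ) (lam : ℝ)
    (S : Finset (Fin m)) : Prop :=
  (∀ T, IsGoodSubset y lam T → T ⊆ S) ∧ (IsGoodSubset y lam S ∨ S = ∅)

/-- The score `g(y) = min{k, min_{0 ≤ ℓ ≤ k}(m − |S_ℓ| + ℓ)}` computed from the sizes of
the largest good subsets. -/
def gScore (m k : ℕ) (cards : ℕ → ℕ) : ℕ :=
  min k ((Finset.range (k + 1)).inf' ⟨0, Finset.mem_range.mpr (Nat.succ_pos k)⟩
    fun ℓ => m - cards ℓ + ℓ)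


lemma dot_symm {d : ℕ} {A : Matrix (Fin d) (Fin d) ℝ} (hA : A.IsHermitian)
    (x z : Fin d → ℝ) : x ⬝ᵥ A *ᵥ z = z ⬝ᵥ A *ᵥ x := by
  have ht : Aᵀ = A := by rw [← Matrix.conjTranspose_eq_transpose_of_trivial]; exact hA
  rw [dotProduct_mulVec, ← mulVec_transpose, ht, dotProduct_comm]

lemma psd_cs {d : ℕ} {A : Matrix (Fin d) (Fin d) ℝ} (hA : A.PosSemidef)
    (x z : Fin d → ℝ) : (x ⬝ᵥ A *ᵥ z) ^ 2 ≤ (x ⬝ᵥ A *ᵥ x) * (z ⬝ᵥ A *ᵥ z) := by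
  have key : ∀ t : ℝ, 0 ≤ (z ⬝ᵥ A *ᵥ z) * (t * t) + (2 * (x ⬝ᵥ A *ᵥ z)) * t + (x ⬝ᵥ A *ᵥ x) := by
    intro t
    have h := hA.dotProduct_mulVec_nonneg (x + t • z)
    have hs : z ⬝ᵥ A *ᵥ x = x ⬝ᵥ A *ᵥ z := dot_symm hA.1 z x
    simp only [star_trivial, mulVec_add, mulVec_smul, dotProduct_add, add_dotProduct,
      dotProduct_smul, smul_dotProduct, smul_eq_mul] at h
    rw [hs] at h; ring_nf at h ⊢; linarith [h]
  have hd := discrim_le_zero key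
  rw [discrim] at hd
  nlinarith [hd]

lemma pd_inv_cs {d : ℕ} {A : Matrix (Fin d) (Fin d) ℝ} (hA : A.PosDef)
    (x z : Fin d → ℝ) : (x ⬝ᵥ z) ^ 2 ≤ (x ⬝ᵥ A *ᵥ x) * (z ⬝ᵥ A⁻¹ *ᵥ z) := by
  have hinv : A * A⁻¹ = 1 := Matrix.mul_nonsing_inv _ ((Matrix.isUnit_iff_isUnit_det _).mp hA.isUnit)
  have h := psd_cs hA.posSemidef x (A⁻¹ *ᵥ z)
  rw [mulVec_mulVec, hinv, one_mulVec, dotProduct_comm (A⁻¹ *ᵥ z) z] at h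
  exact h

lemma inv_form_le {d : ℕ} {A B : Matrix (Fin d) (Fin d) ℝ} (hA : A.PosDef) (hB : B.PosDef)
    {c : ℝ} (hc : 0 < c) (h : ∀ x, c * (x ⬝ᵥ A *ᵥ x) ≤ x ⬝ᵥ B *ᵥ x) (z : Fin d → ℝ) :
    z ⬝ᵥ B⁻¹ *ᵥ z ≤ c⁻¹ * (z ⬝ᵥ A⁻¹ *ᵥ z) := by
  have hBinv : B * B⁻¹ = 1 := Matrix.mul_nonsing_inv _ ((Matrix.isUnit_iff_isUnit_det _).mp hB.isUnit)
  set u := B⁻¹ *ᵥ z with hu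
  have ht0 : 0 ≤ z ⬝ᵥ B⁻¹ *ᵥ z := by simpa using hB.inv.posSemidef.dotProduct_mulVec_nonneg z
  have hs0 : 0 ≤ z ⬝ᵥ A⁻¹ *ᵥ z := by simpa using hA.inv.posSemidef.dotProduct_mulVec_nonneg z
  have h1 : (u ⬝ᵥ z) ^ 2 ≤ (u ⬝ᵥ A *ᵥ u) * (z ⬝ᵥ A⁻¹ *ᵥ z) := pd_inv_cs hA u z
  have h2 : u ⬝ᵥ z = z ⬝ᵥ B⁻¹ *ᵥ z := dotProduct_comm u z
  have h3 : u ⬝ᵥ B *ᵥ u = z ⬝ᵥ B⁻¹ *ᵥ z := by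
    rw [hu, mulVec_mulVec, hBinv, one_mulVec]; exact dotProduct_comm _ z
  have h4 := h u
  rw [h3] at h4
  rw [h2] at h1
  have ha0 : 0 ≤ u ⬝ᵥ A *ᵥ u := by simpa using hA.posSemidef.dotProduct_mulVec_nonneg u
  set t := z ⬝ᵥ B⁻¹ *ᵥ z
  set s := z ⬝ᵥ A⁻¹ *ᵥ z
  rcases eq_or_lt_of_le ht0 with hte | htp
  · rw [← hte]; positivity
  · rw [← mul_le_mul_iff_right₀ hc, mul_inv_cancel_left₀ hc.ne']
    nlinarith [h1, h4, htp, hs0]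

lemma covOf_isHermitian {d m : ℕ} (y : Fin m → Fin d → ℝ) (S : Finset (Fin m)) :
    (covOf m y S).IsHermitian := by
  ext i j
  simp only [covOf, conjTranspose_apply, Matrix.smul_apply, Matrix.sum_apply,
    vecMulVec_apply, star_trivial, smul_eq_mul]
  rw [Finset.sum_congr rfl (fun s _ => mul_comm (y s j) (y s i))]

lemma covOf_congr {d m : ℕ} {y y' : Fin m → Fin d → ℝ} {S : Finset (Fin m)}
    (h : ∀ i ∈ S, y i = y' i) : covOf m y S = covOf m y' S := by
  unfold covOf
  congr 1
  exact Finset.sum_congr rfl fun i hi => by rw [h i hi]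

lemma covOf_erase {d m : ℕ} (y : Fin m → Fin d → ℝ) {S : Finset (Fin m)} {istar : Fin m}
    (h : istar ∈ S) :
    covOf m y (S.erase istar) = covOf m y S - (m : ℝ)⁻¹ • vecMulVec (y istar) (y istar) := by
  unfold covOf
  rw [← smul_sub]
  congr 1
  exact Finset.sum_erase_eq_sub h

lemma dot_vecMulVec {d : ℕ} (v x : Fin d → ℝ) :
    x ⬝ᵥ (vecMulVec v v) *ᵥ x = (v ⬝ᵥ x) ^ 2 := by
  simp only [dotProduct, mulVec, vecMulVec_apply]
  rw [sq, Finset.sum_mul_sum]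
  refine Finset.sum_congr rfl fun i _ => ?_
  rw [Finset.mul_sum]
  exact Finset.sum_congr rfl fun j _ => by ring

lemma intertwine {d m : ℕ} (y y' : Fin m → Fin d → ℝ) (istar : Fin m)
    (hadj : ∀ i, i ≠ istar → y i = y' i) {lam lam' : ℝ} (hlam : 0 < lam)
    (hm : (0:ℝ) < m) (hlam_m : lam < m) (h1 : lam / (1 - lam / m) ≤ lam') (h2 : lam ≤ lam')
    {S : Finset (Fin m)} (hS : IsGoodSubset y lam S) :
    IsGoodSubset y' lam' (S.erase istar) := by
  have hcongr : covOf m y' (S.erase istar) = covOf m y (S.erase istar) :=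
    (covOf_congr fun i hi => hadj i (Finset.ne_of_mem_erase hi)).symm
  by_cases hi : istar ∈ S
  · set Sg := covOf m y S with hSg
    set v := y istar with hv
    have hτ : v ⬝ᵥ Sg⁻¹ *ᵥ v ≤ lam := hS.2 istar hi
    have hτ0 : 0 ≤ v ⬝ᵥ Sg⁻¹ *ᵥ v := by simpa using hS.1.inv.posSemidef.dotProduct_mulVec_nonneg v
    have hE := covOf_erase y hi
    have hpos1 : 0 < 1 - lam / m := by
      rw [sub_pos, div_lt_one hm]; exact hlam_m
    have hkey : ∀ x, (1 - lam / m) * (x ⬝ᵥ Sg *ᵥ x) ≤ x ⬝ᵥ (covOf m y (S.erase istar)) *ᵥ x := by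
      intro x
      have hq : x ⬝ᵥ (covOf m y (S.erase istar)) *ᵥ x
          = x ⬝ᵥ Sg *ᵥ x - (m : ℝ)⁻¹ * (v ⬝ᵥ x) ^ 2 := by
        rw [hE, sub_mulVec, dotProduct_sub, smul_mulVec, dotProduct_smul,
          smul_eq_mul, dot_vecMulVec]
      have hx0 : 0 ≤ x ⬝ᵥ Sg *ᵥ x := by simpa using hS.1.posSemidef.dotProduct_mulVec_nonneg x
      have hcs : (v ⬝ᵥ x) ^ 2 ≤ (x ⬝ᵥ Sg *ᵥ x) * (v ⬝ᵥ Sg⁻¹ *ᵥ v) := by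
        have := pd_inv_cs hS.1 x v
        rwa [dotProduct_comm v x]
      have hcs2 : (v ⬝ᵥ x) ^ 2 ≤ lam * (x ⬝ᵥ Sg *ᵥ x) := by nlinarith [hcs, hτ, hx0, hτ0]
      have hminv : (0:ℝ) ≤ (m : ℝ)⁻¹ := by positivity
      have : (m : ℝ)⁻¹ * (v ⬝ᵥ x) ^ 2 ≤ (m : ℝ)⁻¹ * (lam * (x ⬝ᵥ Sg *ᵥ x)) :=
        mul_le_mul_of_nonneg_left hcs2 hminv
      rw [hq, div_eq_mul_inv]
      nlinarith [this]
    have hPD' : (covOf m y (S.erase istar)).PosDef := by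
      refine PosDef.of_dotProduct_mulVec_pos (covOf_isHermitian y _) fun x hx => ?_
      have : 0 < (1 - lam / m) * (x ⬝ᵥ Sg *ᵥ x) :=
        mul_pos hpos1 (by simpa using hS.1.dotProduct_mulVec_pos hx)
      simpa using lt_of_lt_of_le this (hkey x)
    refine ⟨by rwa [hcongr], fun i hiE => ?_⟩
    have hyi : y' i = y i := (hadj i (Finset.ne_of_mem_erase hiE)).symm
    rw [hcongr, hyi]
    have hle := inv_form_le hS.1 hPD' hpos1 hkey (y i)
    have hlev : y i ⬝ᵥ Sg⁻¹ *ᵥ y i ≤ lam := hS.2 i (Finset.mem_of_mem_erase hiE)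
    have h3 : (1 - lam / m)⁻¹ * (y i ⬝ᵥ Sg⁻¹ *ᵥ y i) ≤ (1 - lam / m)⁻¹ * lam :=
      mul_le_mul_of_nonneg_left hlev (by positivity)
    calc y i ⬝ᵥ (covOf m y (S.erase istar))⁻¹ *ᵥ y i
        ≤ (1 - lam / m)⁻¹ * (y i ⬝ᵥ Sg⁻¹ *ᵥ y i) := hle
      _ ≤ (1 - lam / m)⁻¹ * lam := h3
      _ = lam / (1 - lam / m) := by rw [inv_mul_eq_div]
      _ ≤ lam' := h1
  · rw [Finset.erase_eq_of_notMem hi] at hcongr ⊢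
    refine ⟨by rw [hcongr]; exact hS.1, fun i hiS => ?_⟩
    have hyi : y' i = y i := by
      by_cases h : i = istar
      · exact absurd (h ▸ hiS) hi
      · exact (hadj i h).symm
    rw [hcongr, hyi]
    exact le_trans (hS.2 i hiS) h2

lemma card_step {d m : ℕ} (y y' : Fin m → Fin d → ℝ) (istar : Fin m)
    (hadj : ∀ i, i ≠ istar → y i = y' i)
    (lam0 : ℝ) (hlam0 : 0 < lam0)
    (k : ℕ) (hk0 : 0 < k) (hk : (k : ℝ) ≤ m / (2 * Real.exp 2 * lam0))
    (S T : ℕ → Finset (Fin m))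
    (hS : ∀ ℓ ≤ 2 * k, IsLargestGoodSubset y (Real.exp (ℓ / k : ℝ) * lam0) (S ℓ))
    (hT : ∀ ℓ ≤ 2 * k, IsLargestGoodSubset y' (Real.exp (ℓ / k : ℝ) * lam0) (T ℓ))
    (ℓ : ℕ) (hℓ : ℓ < k) : (S ℓ).card ≤ (T (ℓ + 1)).card + 1 := by
  have hden : (0:ℝ) < 2 * Real.exp 2 * lam0 := by positivity
  have hkm : (k : ℝ) * (2 * Real.exp 2 * lam0) ≤ m := (le_div_iff₀ hden).mp hk
  have hk1 : (1:ℝ) ≤ (k:ℝ) := by exact_mod_cast hk0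
  have hkR : (0:ℝ) < (k:ℝ) := by linarith
  have hm : (0:ℝ) < m := by nlinarith [hkm, hden, hk1]
  set lam : ℝ := Real.exp ((ℓ : ℝ) / k) * lam0 with hlamdef
  set lam' : ℝ := Real.exp (((ℓ+1 : ℕ) : ℝ) / k) * lam0 with hlamdef'
  have hlam : 0 < lam := by positivity
  have hexp1 : Real.exp ((ℓ:ℝ)/k) ≤ Real.exp 2 := by
    apply Real.exp_le_exp.mpr
    have : (ℓ:ℝ)/k ≤ 1 := (div_le_one hkR).mpr (by exact_mod_cast hℓ.le)
    linarith
  have hlame2 : lam ≤ Real.exp 2 * lam0 := mul_le_mul_of_nonneg_right hexp1 hlam0.le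
  have hcore : lam * (2 * k) ≤ m := by nlinarith [hkm, hlame2, hkR]
  have hlam_m : lam < m := by nlinarith [hcore, hlam, hk1]
  have hx : lam / m ≤ 1 / (2 * (k:ℝ)) := by
    rw [div_le_div_iff₀ hm (by positivity)]
    linarith [hcore]
  have hpos1 : 0 < 1 - lam / m := by
    rw [sub_pos, div_lt_one hm]; exact hlam_m
  have hcast : (((ℓ+1 : ℕ)) : ℝ)/k = (ℓ:ℝ)/k + 1/k := by push_cast; ring
  have hsplit : lam' = Real.exp (1/(k:ℝ)) * lam := by
    rw [hlamdef', hcast, Real.exp_add]; ring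
  have h1k : 1 + 1/(k:ℝ) ≤ Real.exp (1/(k:ℝ)) := by
    have := Real.add_one_le_exp (1/(k:ℝ)); linarith
  have hx2 : 2 * (lam/m) ≤ 1/(k:ℝ) := by
    have h22 : (2:ℝ) * (1/(2*k)) = 1/k := by field_simp
    linarith [hx]
  have hxh : lam/m ≤ 1/2 := by
    have h2k : (2:ℝ) ≤ 2*k := by linarith
    have := one_div_le_one_div_of_le (by norm_num : (0:ℝ) < 2) h2k
    linarith [hx]
  have hx0 : (0:ℝ) ≤ lam/m := by positivity
  have hE : 1 + 2*(lam/m) ≤ Real.exp (1/(k:ℝ)) := by linarith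
  have hmain : lam / (1 - lam/m) ≤ lam' := by
    rw [div_le_iff₀ hpos1, hsplit]
    nlinarith [mul_le_mul_of_nonneg_right hE (by positivity : (0:ℝ) ≤ lam * (1 - lam/m)),
      mul_nonneg (mul_nonneg hlam.le hx0) (by linarith : (0:ℝ) ≤ 1 - 2*(lam/m)), hlam, hx0]
  have hlamle : lam ≤ lam' := by
    have h1 : (1:ℝ) ≤ Real.exp (1/(k:ℝ)) := Real.one_le_exp (by positivity)
    rw [hsplit]; nlinarith [hlam]
  rcases (hS ℓ (by omega)).2 with hgood | hemp
  · have hI := intertwine y y' istar hadj hlam hm hlam_m hmain hlamle hgood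
    have hsub := (hT (ℓ+1) (by omega)).1 _ hI
    have h1 := Finset.card_le_card hsub
    have h2 := Finset.pred_card_le_card_erase (s := S ℓ) (a := istar)
    omega
  · simp [hemp]

lemma gScore_one_side {d m : ℕ} (y y' : Fin m → Fin d → ℝ) (istar : Fin m)
    (hadj : ∀ i, i ≠ istar → y i = y' i)
    (lam0 : ℝ) (hlam0 : 0 < lam0)
    (k : ℕ) (hk0 : 0 < k) (hk : (k : ℝ) ≤ m / (2 * Real.exp 2 * lam0))
    (S T : ℕ → Finset (Fin m))
    (hS : ∀ ℓ ≤ 2 * k, IsLargestGoodSubset y (Real.exp (ℓ / k : ℝ) * lam0) (S ℓ))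
    (hT : ∀ ℓ ≤ 2 * k, IsLargestGoodSubset y' (Real.exp (ℓ / k : ℝ) * lam0) (T ℓ)) :
    gScore m k (fun ℓ => (T ℓ).card) ≤ gScore m k (fun ℓ => (S ℓ).card) + 2 := by
  set fS : ℕ → ℕ := fun ℓ => m - (S ℓ).card + ℓ with hfS
  set A := (Finset.range (k + 1)).inf' Finset.nonempty_range_add_one fS with hA
  by_cases hcase : A < k
  · obtain ⟨ℓs, hmem, hAeq⟩ := Finset.exists_mem_eq_inf'
      (Finset.nonempty_range_add_one (n := k)) fS
    have hAeq' : A = fS ℓs := hAeq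
    have hfSℓ : fS ℓs = m - (S ℓs).card + ℓs := rfl
    have hℓA : ℓs ≤ A := by omega
    have hℓlt : ℓs < k := lt_of_le_of_lt hℓA hcase
    have hcard := card_step y y' istar hadj lam0 hlam0 k hk0 hk S T hS hT ℓs hℓlt
    have hmem' : ℓs + 1 ∈ Finset.range (k + 1) := by
      simp only [Finset.mem_range]; omega
    have hTle : gScore m k (fun ℓ => (T ℓ).card) ≤ m - (T (ℓs+1)).card + (ℓs+1) :=
      le_trans (min_le_right _ _) (Finset.inf'_le _ hmem')
    have hg : gScore m k (fun ℓ => (S ℓ).card) = min k A := rfl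
    rw [hg, min_eq_right hcase.le, hAeq', hfSℓ]
    omega
  · have hTk : gScore m k (fun ℓ => (T ℓ).card) ≤ k := min_le_left _ _
    have hg : gScore m k (fun ℓ => (S ℓ).card) = min k A := rfl
    have hSk : gScore m k (fun ℓ => (S ℓ).card) = k := by
      rw [hg, min_eq_left (le_of_not_gt hcase)]
    omega

/-- The score of the stable covariance estimator has sensitivity 2. -/
theorem gScore_sensitivity
    {d m : ℕ} (y y' : Fin m → Fin d → ℝ) (istar : Fin m)
    (hadj : ∀ i, i ≠ istar → y i = y' i)
    (lam0 : ℝ) (hlam0 : 0 < lam0)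
    (k : ℕ) (hk0 : 0 < k) (hk : (k : ℝ) ≤ m / (2 * Real.exp 2 * lam0))
    (S T : ℕ → Finset (Fin m))
    (hS : ∀ ℓ ≤ 2 * k, IsLargestGoodSubset y (Real.exp (ℓ / k : ℝ) * lam0) (S ℓ))
    (hT : ∀ ℓ ≤ 2 * k, IsLargestGoodSubset y' (Real.exp (ℓ / k : ℝ) * lam0) (T ℓ)) :
    |(gScore m k (fun ℓ => (S ℓ).card) : ℤ) - (gScore m k (fun ℓ => (T ℓ).card) : ℤ)|
      ≤ 2 := by
  have hadj' : ∀ i, i ≠ istar → y' i = y i := fun i h => (hadj i h).symm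
  have h1 := gScore_one_side y y' istar hadj lam0 hlam0 k hk0 hk S T hS hT
  have h2 := gScore_one_side y' y istar hadj' lam0 hlam0 k hk0 hk T S hT hS
  rw [abs_sub_le_iff]
  constructor <;> [skip; skip] <;> omega
end

section
/- Let x = (x_1,...,x_n) be a dataset in ℝ^d, λ > 0, τ > n/2 a natural number, and Σ₁, Σ₂ positive definite with (1−γ)Σ₁ ⪯ Σ₂ ⪯ (1/(1−γ))Σ₁ for γ ≤ 1/2. Let w be a (τ, λ, Σ₁)-weighted-core and v a (τ, λ, Σ₂)-weighted-core for x with respect to a reference set R ⊆ [n]. If ‖w − v‖₁ ≤ ρ, then ‖∑_i w_i x_i − ∑_i v_i x_i‖²_{Σ₁} ≤ (1+2γ)·ρ²·λ, where ‖u‖²_{Σ} = uᵀΣ^{-1}u. -/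
open Matrix BigOperators

/-- Squared Mahalanobis norm `uᵀ Σ⁻¹ u`. -/
noncomputable def mahalSq {d : ℕ} (Sig : Matrix (Fin d) (Fin d) ℝ) (u : Fin d → ℝ) : ℝ :=
  u ⬝ᵥ Sig⁻¹ *ᵥ u

/-- `w` is a `(τ, λ, Σ)`-weighted core for `x` with respect to `R`: `w` is a probability
distribution on `[n]` and each `i ∈ supp(w)` has at least `τ` reference points `j ∈ R`
with `‖x_i − x_j‖²_Σ ≤ λ`. -/
def IsWeightedCore {d n : ℕ} (x : Fin n → Fin d → ℝ) (Sig : Matrix (Fin d) (Fin d) ℝ)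
    (τ : ℕ) (lam : ℝ) (R : Finset (Fin n)) (w : Fin n → ℝ) : Prop :=
  (∀ i, 0 ≤ w i) ∧ (∑ i, w i = 1) ∧
    ∀ i, w i ≠ 0 → ∃ N ⊆ R, τ ≤ N.card ∧ ∀ j ∈ N, mahalSq Sig (x i - x j) ≤ lam

section Aux

variable {d : ℕ} {A : Matrix (Fin d) (Fin d) ℝ}

lemma qf_nonneg (hA : A.PosSemidef) (u : Fin d → ℝ) : 0 ≤ u ⬝ᵥ A *ᵥ u := by
  simpa using hA.dotProduct_mulVec_nonneg u

lemma qf_symm (hA : A.IsHermitian) (u v : Fin d → ℝ) :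
    u ⬝ᵥ A *ᵥ v = v ⬝ᵥ A *ᵥ u := by
  rw [dotProduct_mulVec, ← mulVec_transpose]
  rw [show Aᵀ = A from by have h := hA.eq; rwa [conjTranspose_eq_transpose_of_trivial] at h]
  exact dotProduct_comm _ _

lemma qf_cs (hA : A.PosSemidef) (u v : Fin d → ℝ) :
    u ⬝ᵥ A *ᵥ v ≤ Real.sqrt (u ⬝ᵥ A *ᵥ u) * Real.sqrt (v ⬝ᵥ A *ᵥ v) := by
  have hd : discrim (v ⬝ᵥ A *ᵥ v) (2 * (u ⬝ᵥ A *ᵥ v)) (u ⬝ᵥ A *ᵥ u) ≤ 0 := by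
    apply discrim_le_zero
    intro t
    have h := qf_nonneg hA (u + t • v)
    have hexp : (u + t • v) ⬝ᵥ A *ᵥ (u + t • v)
        = (v ⬝ᵥ A *ᵥ v) * t ^ 2 + 2 * (u ⬝ᵥ A *ᵥ v) * t + u ⬝ᵥ A *ᵥ u := by
      simp only [mulVec_add, add_dotProduct, dotProduct_add, mulVec_smul,
        smul_dotProduct, dotProduct_smul, smul_eq_mul, qf_symm hA.1 v u]
      ring
    linarith [hexp ▸ h]
  have hsq : (u ⬝ᵥ A *ᵥ v) ^ 2 ≤ (u ⬝ᵥ A *ᵥ u) * (v ⬝ᵥ A *ᵥ v) := by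
    unfold discrim at hd; nlinarith
  calc u ⬝ᵥ A *ᵥ v ≤ |u ⬝ᵥ A *ᵥ v| := le_abs_self _
    _ = Real.sqrt ((u ⬝ᵥ A *ᵥ v) ^ 2) := (Real.sqrt_sq_eq_abs _).symm
    _ ≤ Real.sqrt ((u ⬝ᵥ A *ᵥ u) * (v ⬝ᵥ A *ᵥ v)) := Real.sqrt_le_sqrt hsq
    _ = _ := Real.sqrt_mul (qf_nonneg hA u) _

lemma qf_triangle (hA : A.PosSemidef) (u v : Fin d → ℝ) :
    Real.sqrt ((u + v) ⬝ᵥ A *ᵥ (u + v))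
      ≤ Real.sqrt (u ⬝ᵥ A *ᵥ u) + Real.sqrt (v ⬝ᵥ A *ᵥ v) := by
  set a := Real.sqrt (u ⬝ᵥ A *ᵥ u) with ha
  set b := Real.sqrt (v ⬝ᵥ A *ᵥ v) with hb
  have ha0 : 0 ≤ a := Real.sqrt_nonneg _
  have hb0 : 0 ≤ b := Real.sqrt_nonneg _
  have hua : u ⬝ᵥ A *ᵥ u = a ^ 2 := (Real.sq_sqrt (qf_nonneg hA u)).symm
  have hvb : v ⬝ᵥ A *ᵥ v = b ^ 2 := (Real.sq_sqrt (qf_nonneg hA v)).symm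
  have hcs : u ⬝ᵥ A *ᵥ v ≤ a * b := qf_cs hA u v
  have hexp : (u + v) ⬝ᵥ A *ᵥ (u + v)
      = u ⬝ᵥ A *ᵥ u + 2 * (u ⬝ᵥ A *ᵥ v) + v ⬝ᵥ A *ᵥ v := by
    rw [mulVec_add, add_dotProduct, dotProduct_add, dotProduct_add, qf_symm hA.1 v u]
    ring
  calc Real.sqrt ((u + v) ⬝ᵥ A *ᵥ (u + v)) ≤ Real.sqrt ((a + b) ^ 2) := by
        apply Real.sqrt_le_sqrt
        rw [hexp, hua, hvb]; nlinarith
    _ = |a + b| := Real.sqrt_sq_eq_abs _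
    _ = a + b := abs_of_nonneg (by linarith)

lemma qf_smul (c : ℝ) (u : Fin d → ℝ) :
    Real.sqrt ((c • u) ⬝ᵥ A *ᵥ (c • u)) = |c| * Real.sqrt (u ⬝ᵥ A *ᵥ u) := by
  have : (c • u) ⬝ᵥ A *ᵥ (c • u) = c ^ 2 * (u ⬝ᵥ A *ᵥ u) := by
    rw [mulVec_smul, smul_dotProduct, dotProduct_smul]
    simp only [smul_eq_mul]; ring
  rw [this, Real.sqrt_mul (sq_nonneg c), Real.sqrt_sq_eq_abs]

lemma qf_sum (hA : A.PosSemidef) {m : Type*} (s : Finset m) (g : m → Fin d → ℝ) :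
    Real.sqrt ((∑ i ∈ s, g i) ⬝ᵥ A *ᵥ (∑ i ∈ s, g i))
      ≤ ∑ i ∈ s, Real.sqrt (g i ⬝ᵥ A *ᵥ g i) := by
  induction s using Finset.cons_induction with
  | empty => simp
  | cons i s hi ih =>
      rw [Finset.sum_cons, Finset.sum_cons]
      exact (qf_triangle hA _ _).trans (by linarith)

lemma quad_inv_anti {d : ℕ} {A B : Matrix (Fin d) (Fin d) ℝ}
    (hA : A.PosDef) (hB : B.PosDef) (hAB : (B - A).PosSemidef) (u : Fin d → ℝ) :
    u ⬝ᵥ B⁻¹ *ᵥ u ≤ u ⬝ᵥ A⁻¹ *ᵥ u := by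
  have hBdet : IsUnit B.det := isUnit_iff_ne_zero.2 hB.det_pos.ne'
  have hAdet : IsUnit A.det := isUnit_iff_ne_zero.2 hA.det_pos.ne'
  set z := B⁻¹ *ᵥ u with hz
  set y := A⁻¹ *ᵥ u with hy
  have hBz : B *ᵥ z = u := by
    rw [hz, mulVec_mulVec, Matrix.mul_nonsing_inv _ hBdet, one_mulVec]
  have hAy : A *ᵥ y = u := by
    rw [hy, mulVec_mulVec, Matrix.mul_nonsing_inv _ hAdet, one_mulVec]
  have h1 : 0 ≤ z ⬝ᵥ B *ᵥ z - z ⬝ᵥ A *ᵥ z := by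
    have := hAB.dotProduct_mulVec_nonneg z
    simpa [sub_mulVec, dotProduct_sub] using this
  have h2 : 0 ≤ (z - y) ⬝ᵥ A *ᵥ (z - y) := by
    have := hA.posSemidef.dotProduct_mulVec_nonneg (z - y); simpa using this
  have hyAz : y ⬝ᵥ A *ᵥ z = u ⬝ᵥ z := by rw [qf_symm hA.1, hAy, dotProduct_comm]
  have hzAy : z ⬝ᵥ A *ᵥ y = u ⬝ᵥ z := by rw [hAy, dotProduct_comm]
  have hyAy : y ⬝ᵥ A *ᵥ y = u ⬝ᵥ y := by rw [hAy, dotProduct_comm]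
  have hzBz : z ⬝ᵥ B *ᵥ z = u ⬝ᵥ z := by rw [hBz, dotProduct_comm]
  have hexp : (z - y) ⬝ᵥ A *ᵥ (z - y)
      = z ⬝ᵥ A *ᵥ z - z ⬝ᵥ A *ᵥ y - y ⬝ᵥ A *ᵥ z + y ⬝ᵥ A *ᵥ y := by
    rw [mulVec_sub, sub_dotProduct, dotProduct_sub, dotProduct_sub]; ring
  rw [hexp, hzAy, hyAz, hyAy] at h2
  rw [hzBz] at h1
  linarith

end Aux

/-- Identifiability for weighted cores on the same dataset: close cores have close means
in Mahalanobis norm. -/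
theorem weighted_cores_means_close
    {d n : ℕ} (x : Fin n → Fin d → ℝ) (lam : ℝ) (hlam : 0 < lam)
    (τ : ℕ) (hτ : (n : ℝ) / 2 < τ) (R : Finset (Fin n))
    (Sig1 Sig2 : Matrix (Fin d) (Fin d) ℝ) (h1 : Sig1.PosDef) (h2 : Sig2.PosDef)
    (γ : ℝ) (hγ0 : 0 ≤ γ) (hγ : γ ≤ 1 / 2)
    (hlow : (Sig2 - (1 - γ) • Sig1).PosSemidef)
    (hhigh : ((1 / (1 - γ)) • Sig1 - Sig2).PosSemidef)
    (w v : Fin n → ℝ)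
    (hw : IsWeightedCore x Sig1 τ lam R w) (hv : IsWeightedCore x Sig2 τ lam R v)
    (ρ : ℝ) (hρ : ∑ i, |w i - v i| ≤ ρ) :
    mahalSq Sig1 (∑ i, w i • x i - ∑ i, v i • x i) ≤ (1 + 2 * γ) * ρ ^ 2 * lam := by
  obtain ⟨hw0, hw1, hwN⟩ := hw
  obtain ⟨hv0, hv1, hvN⟩ := hv
  have hγ1 : (0:ℝ) < 1 - γ := by linarith
  have hA : (Sig1⁻¹).PosSemidef := h1.inv.posSemidef
  set f : (Fin d → ℝ) → ℝ := fun u => Real.sqrt (u ⬝ᵥ Sig1⁻¹ *ᵥ u) with hf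
  have hfm : ∀ u, mahalSq Sig1 u = f u ^ 2 := by
    intro u
    simp only [hf, mahalSq]
    exact (Real.sq_sqrt (qf_nonneg hA u)).symm
  have hf0 : ∀ u, 0 ≤ f u := fun u => Real.sqrt_nonneg _
  have hfle : ∀ (u : Fin d → ℝ) (c : ℝ), mahalSq Sig1 u ≤ c → f u ≤ Real.sqrt c := by
    intro u c hc
    simp only [hf]
    exact Real.sqrt_le_sqrt (by simpa [mahalSq] using hc)
  have hftri : ∀ u₁ u₂ : Fin d → ℝ, f (u₁ + u₂) ≤ f u₁ + f u₂ := by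
    intro u₁ u₂; simp only [hf]; exact qf_triangle hA u₁ u₂
  have hfsmul : ∀ (c : ℝ) (u : Fin d → ℝ), f (c • u) = |c| * f u := by
    intro c u; simp only [hf]; exact qf_smul c u
  -- comparison of Mahalanobis norms
  have hcomp : ∀ u : Fin d → ℝ, (1 - γ) * mahalSq Sig1 u ≤ mahalSq Sig2 u := by
    intro u
    have hc : (0:ℝ) < 1 / (1 - γ) := by positivity
    have hBpd : ((1 / (1 - γ)) • Sig1).PosDef := by
      refine .of_dotProduct_mulVec_pos ?_ fun z hz => ?_
      · show ((1 / (1 - γ)) • Sig1)ᴴ = _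
        rw [conjTranspose_smul, h1.isHermitian.eq]
        norm_num
      · have := h1.dotProduct_mulVec_pos hz
        simp only [smul_mulVec, dotProduct_smul, smul_eq_mul]
        exact mul_pos hc this
    have hBinv : ((1 / (1 - γ)) • Sig1)⁻¹ = (1 - γ) • Sig1⁻¹ := by
      apply Matrix.inv_eq_right_inv
      rw [Matrix.smul_mul, Matrix.mul_smul, smul_smul,
        Matrix.mul_nonsing_inv _ (isUnit_iff_ne_zero.2 h1.det_pos.ne')]
      rw [one_div, inv_mul_cancel₀ hγ1.ne']
      simp
    have h := quad_inv_anti h2 hBpd hhigh u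
    rw [hBinv] at h
    simp only [mahalSq]
    simpa [smul_mulVec, dotProduct_smul, smul_eq_mul] using h
  -- pairwise distances between supports
  have hratio : lam / (1 - γ) ≤ (1 + 2 * γ) * lam := by
    rw [div_le_iff₀ hγ1]
    nlinarith [mul_nonneg (mul_nonneg hγ0 (by linarith : (0:ℝ) ≤ 1 - 2 * γ)) hlam.le]
  have hdist : ∀ i j, w i ≠ 0 → v j ≠ 0 →
      f (x i - x j) ≤ 2 * Real.sqrt ((1 + 2 * γ) * lam) := by
    intro i j hwi hvj
    obtain ⟨Ni, hNiR, hNic, hNi⟩ := hwN i hwi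
    obtain ⟨Nj, hNjR, hNjc, hNj⟩ := hvN j hvj
    have hint : (Ni ∩ Nj).Nonempty := by
      rw [← Finset.card_pos]
      have hn2τ : n < 2 * τ := by
        have : (n:ℝ) < 2 * τ := by linarith
        exact_mod_cast this
      have hu : (Ni ∪ Nj).card ≤ n := by
        calc (Ni ∪ Nj).card ≤ (Finset.univ : Finset (Fin n)).card :=
              Finset.card_le_card (Finset.subset_univ _)
          _ = n := by simp
      have := Finset.card_union_add_card_inter Ni Nj
      omega
    obtain ⟨ι, hι⟩ := hint
    rw [Finset.mem_inter] at hι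
    have e1 : mahalSq Sig1 (x i - x ι) ≤ lam := hNi ι hι.1
    have e2 : mahalSq Sig2 (x j - x ι) ≤ lam := hNj ι hι.2
    have e3 : mahalSq Sig1 (x j - x ι) ≤ (1 + 2 * γ) * lam := by
      have h := hcomp (x j - x ι)
      have : mahalSq Sig1 (x j - x ι) ≤ lam / (1 - γ) := by
        rw [le_div_iff₀ hγ1]; nlinarith
      linarith
    have d1 : f (x i - x ι) ≤ Real.sqrt ((1 + 2 * γ) * lam) := by
      refine (hfle _ _ e1).trans (Real.sqrt_le_sqrt ?_)
      nlinarith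
    have d2 : f (x ι - x j) ≤ Real.sqrt ((1 + 2 * γ) * lam) := by
      have : x ι - x j = (-1 : ℝ) • (x j - x ι) := by
        simp [neg_smul, one_smul, neg_sub]
      rw [this, hfsmul]
      simpa using hfle _ _ e3
    calc f (x i - x j) = f ((x i - x ι) + (x ι - x j)) := by
          congr 1; abel
      _ ≤ f (x i - x ι) + f (x ι - x j) := hftri _ _
      _ ≤ 2 * Real.sqrt ((1 + 2 * γ) * lam) := by linarith
  set D := 2 * Real.sqrt ((1 + 2 * γ) * lam) with hD
  have hD0 : 0 ≤ D := by positivity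
  -- the coupling
  set p : Fin n → ℝ := fun i => max (w i - v i) 0 with hp
  set q : Fin n → ℝ := fun i => max (v i - w i) 0 with hq
  have hp0 : ∀ i, 0 ≤ p i := fun i => le_max_right _ _
  have hq0 : ∀ i, 0 ≤ q i := fun i => le_max_right _ _
  have hpq : ∀ i, w i - v i = p i - q i := by
    intro i
    simp only [hp, hq]
    rcases le_total (w i) (v i) with h | h
    · rw [max_eq_right (by linarith), max_eq_left (by linarith)]; ring
    · rw [max_eq_left (by linarith), max_eq_right (by linarith)]; ring
  have habs : ∀ i, |w i - v i| = p i + q i := by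
    intro i
    simp only [hp, hq]
    rcases le_total (w i) (v i) with h | h
    · rw [abs_of_nonpos (by linarith), max_eq_right (by linarith),
        max_eq_left (by linarith)]; ring
    · rw [abs_of_nonneg (by linarith), max_eq_left (by linarith),
        max_eq_right (by linarith)]; ring
  have hpw : ∀ i, p i ≠ 0 → w i ≠ 0 := by
    intro i hpi hwi
    apply hpi
    simp only [hp]
    exact max_eq_right (by rw [hwi]; linarith [hv0 i])
  have hqv : ∀ i, q i ≠ 0 → v i ≠ 0 := by
    intro i hqi hvi
    apply hqi
    simp only [hq]
    exact max_eq_right (by rw [hvi]; linarith [hw0 i])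
  set s := ∑ i, p i with hs
  have hs0 : 0 ≤ s := Finset.sum_nonneg fun i _ => hp0 i
  have hqs : ∑ i, q i = s := by
    have h0 : ∑ i, (w i - v i) = 0 := by
      rw [Finset.sum_sub_distrib, hw1, hv1]; ring
    have h1' : ∑ i, (p i - q i) = 0 := by
      calc ∑ i, (p i - q i) = ∑ i, (w i - v i) :=
            Finset.sum_congr rfl fun i _ => (hpq i).symm
        _ = 0 := h0
    rw [Finset.sum_sub_distrib] at h1'
    rw [hs]; linarith
  have h2s : 2 * s ≤ ρ := by
    have : ∑ i, |w i - v i| = 2 * s := by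
      rw [Finset.sum_congr rfl fun i _ => habs i, Finset.sum_add_distrib, hqs, hs]
      ring
    linarith
  set μ := ∑ i, w i • x i - ∑ i, v i • x i with hμ
  have hμeq : μ = ∑ i, p i • x i - ∑ i, q i • x i := by
    rw [hμ, ← Finset.sum_sub_distrib, ← Finset.sum_sub_distrib]
    exact Finset.sum_congr rfl fun i _ => by rw [← sub_smul, ← sub_smul, hpq]
  have key : f μ ≤ s * D := by
    rcases eq_or_lt_of_le hs0 with hs' | hs'
    · have hpz : ∀ i ∈ Finset.univ, p i = 0 :=
        (Finset.sum_eq_zero_iff_of_nonneg fun i _ => hp0 i).1 hs'.symm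
      have hqz : ∀ i ∈ Finset.univ, q i = 0 :=
        (Finset.sum_eq_zero_iff_of_nonneg fun i _ => hq0 i).1 (hqs.trans hs'.symm)
      have hμ0 : μ = 0 := by
        rw [hμeq]
        have e1 : ∑ i, p i • x i = (0 : Fin d → ℝ) :=
          Finset.sum_eq_zero fun i hi => by rw [hpz i hi, zero_smul]
        have e2 : ∑ i, q i • x i = (0 : Fin d → ℝ) :=
          Finset.sum_eq_zero fun i hi => by rw [hqz i hi, zero_smul]
        rw [e1, e2, sub_self]
      rw [hμ0, ← hs', zero_mul]
      simp [hf]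
    · have hinner : ∀ i : Fin n, ∑ j, (p i * q j) • (x i - x j)
          = (p i * s) • x i - p i • ∑ j, q j • x j := by
        intro i
        have hterm0 : ∀ j : Fin n, (p i * q j) • (x i - x j)
            = (p i * q j) • x i - p i • (q j • x j) := by
          intro j; rw [smul_sub, smul_smul]
        rw [Finset.sum_congr rfl fun j _ => hterm0 j, Finset.sum_sub_distrib,
          ← Finset.sum_smul, ← Finset.mul_sum, hqs, ← Finset.smul_sum]
      have hsmul : s • μ = ∑ i, ∑ j, (p i * q j) • (x i - x j) := by
        have hL : s • μ = ∑ i, (p i * s) • x i - s • ∑ j, q j • x j := by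
          rw [hμeq, smul_sub, Finset.smul_sum]
          congr 1
          exact Finset.sum_congr rfl fun i _ => by rw [smul_smul, mul_comm s (p i)]
        have hR : ∑ i, ∑ j, (p i * q j) • (x i - x j)
            = ∑ i, (p i * s) • x i - s • ∑ j, q j • x j := by
          rw [Finset.sum_congr rfl fun i _ => hinner i, Finset.sum_sub_distrib,
            ← Finset.sum_smul, ← hs]
        rw [hL, hR]
      have hterm : ∀ i j : Fin n, f ((p i * q j) • (x i - x j)) ≤ (p i * q j) * D := by
        intro i j
        rw [hfsmul, abs_of_nonneg (mul_nonneg (hp0 i) (hq0 j))]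
        rcases eq_or_ne (p i * q j) 0 with h | h
        · rw [h]; simp
        · have hpi : p i ≠ 0 := fun hc => h (by rw [hc, zero_mul])
          have hqj : q j ≠ 0 := fun hc => h (by rw [hc, mul_zero])
          exact mul_le_mul_of_nonneg_left (hdist i j (hpw i hpi) (hqv j hqj))
            (mul_nonneg (hp0 i) (hq0 j))
      have hmain : s * f μ ≤ s * (s * D) := by
        calc s * f μ = f (s • μ) := by rw [hfsmul, abs_of_nonneg hs0]
          _ = f (∑ i, ∑ j, (p i * q j) • (x i - x j)) := by rw [hsmul]
          _ ≤ ∑ i, f (∑ j, (p i * q j) • (x i - x j)) := by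
              simp only [hf]; exact qf_sum hA _ _
          _ ≤ ∑ i, ∑ j, f ((p i * q j) • (x i - x j)) := by
              refine Finset.sum_le_sum fun i _ => ?_
              simp only [hf]; exact qf_sum hA _ _
          _ ≤ ∑ i, ∑ j, (p i * q j) * D :=
              Finset.sum_le_sum fun i _ => Finset.sum_le_sum fun j _ => hterm i j
          _ = s * (s * D) := by
              have hrow : ∀ i : Fin n, ∑ j, (p i * q j) * D = p i * (s * D) := by
                intro i
                rw [← Finset.sum_mul, ← Finset.mul_sum, hqs]; ring
              rw [Finset.sum_congr rfl fun i _ => hrow i, ← Finset.sum_mul, ← hs]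
      exact le_of_mul_le_mul_left hmain hs'
  have hfμ : f μ ≤ (ρ / 2) * D :=
    key.trans (mul_le_mul_of_nonneg_right (by linarith) hD0)
  have hsq : f μ ^ 2 ≤ ((ρ / 2) * D) ^ 2 := by
    have := pow_le_pow_left₀ (hf0 μ) hfμ 2
    exact this
  have hDsq : D ^ 2 = 4 * ((1 + 2 * γ) * lam) := by
    rw [hD, mul_pow, Real.sq_sqrt (by positivity)]
    ring
  rw [hfm μ]
  calc f μ ^ 2 ≤ ((ρ / 2) * D) ^ 2 := hsq
    _ = (ρ / 2) ^ 2 * D ^ 2 := by ring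
    _ = (1 + 2 * γ) * ρ ^ 2 * lam := by rw [hDsq]; ring
end

section
/- Let x ∈ (ℝ^d)^n, λ > 0, τ ∈ ℕ with τ > n/2 + 1, and let x' differ from x in exactly one index i*. Let Σ₁, Σ₂ be positive definite with (1−γ)Σ₁ ⪯ Σ₂ ⪯ (1/(1−γ))Σ₁, γ ≤ 1/2. Let w be a (τ, λ, Σ₁)-weighted-core for x and v a (τ, λ, Σ₂)-weighted-core for x', both w.r.t. R ⊆ [n], with ‖w − v‖₁ ≤ ρ. Then ‖∑_i w_i x_i − ∑_i v_i x'_i‖²_{Σ₁} ≤ (1+2γ)·λ·(ρ + ‖w‖_∞ + ‖v‖_∞)². -/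
open Matrix BigOperators

namespace WCAux

variable {d : ℕ} {M : Matrix (Fin d) (Fin d) ℝ}

lemma psd_nonneg (hM : M.PosSemidef) (u : Fin d → ℝ) : 0 ≤ u ⬝ᵥ M *ᵥ u := by
  simpa using hM.dotProduct_mulVec_nonneg u

lemma herm_symm (hM : M.IsHermitian) (u v : Fin d → ℝ) :
    u ⬝ᵥ M *ᵥ v = v ⬝ᵥ M *ᵥ u := by
  have hMt : Mᵀ = M := by
    ext i j
    simpa using congrFun (congrFun hM i) j
  rw [Matrix.dotProduct_mulVec, ← Matrix.mulVec_transpose, hMt, dotProduct_comm]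

lemma expand (hM : M.IsHermitian) (u v : Fin d → ℝ) :
    (u + v) ⬝ᵥ M *ᵥ (u + v)
      = u ⬝ᵥ M *ᵥ u + 2 * (u ⬝ᵥ M *ᵥ v) + v ⬝ᵥ M *ᵥ v := by
  rw [Matrix.mulVec_add, add_dotProduct, dotProduct_add, dotProduct_add,
    herm_symm hM v u]
  ring

lemma cs (hM : M.PosSemidef) (u v : Fin d → ℝ) :
    (u ⬝ᵥ M *ᵥ v) ^ 2 ≤ (u ⬝ᵥ M *ᵥ u) * (v ⬝ᵥ M *ᵥ v) := by
  have key : ∀ t : ℝ,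
      0 ≤ (v ⬝ᵥ M *ᵥ v) * (t * t) + (2 * (u ⬝ᵥ M *ᵥ v)) * t + (u ⬝ᵥ M *ᵥ u) := by
    intro t
    have h0 := psd_nonneg hM (u + t • v)
    have e : (u + t • v) ⬝ᵥ M *ᵥ (u + t • v)
        = (v ⬝ᵥ M *ᵥ v) * (t * t) + (2 * (u ⬝ᵥ M *ᵥ v)) * t + (u ⬝ᵥ M *ᵥ u) := by
      rw [expand hM.1]
      simp only [Matrix.mulVec_smul, dotProduct_smul, smul_dotProduct,
        smul_eq_mul]
      ring
    linarith [e ▸ h0]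
  have hd := discrim_le_zero key
  rw [discrim] at hd
  nlinarith [hd]

/-- Mahalanobis-type seminorm associated to a PSD matrix. -/
noncomputable def nrm (M : Matrix (Fin d) (Fin d) ℝ) (u : Fin d → ℝ) : ℝ :=
  Real.sqrt (u ⬝ᵥ M *ᵥ u)

lemma nrm_nonneg (u : Fin d → ℝ) : 0 ≤ nrm M u := Real.sqrt_nonneg _

lemma nrm_sq (hM : M.PosSemidef) (u : Fin d → ℝ) : (nrm M u) ^ 2 = u ⬝ᵥ M *ᵥ u :=
  Real.sq_sqrt (psd_nonneg hM u)

lemma nrm_tri (hM : M.PosSemidef) (u v : Fin d → ℝ) :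
    nrm M (u + v) ≤ nrm M u + nrm M v := by
  set a := nrm M u with ha'
  set b := nrm M v with hb'
  have ha : a ^ 2 = u ⬝ᵥ M *ᵥ u := nrm_sq hM u
  have hb : b ^ 2 = v ⬝ᵥ M *ᵥ v := nrm_sq hM v
  have hab : 0 ≤ a * b := mul_nonneg (Real.sqrt_nonneg _) (Real.sqrt_nonneg _)
  have hB : u ⬝ᵥ M *ᵥ v ≤ a * b := by
    have h2 : (u ⬝ᵥ M *ᵥ v) ^ 2 ≤ (a * b) ^ 2 := by
      rw [mul_pow, ha, hb]; exact cs hM u v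
    have h3 := Real.sqrt_le_sqrt h2
    rw [Real.sqrt_sq_eq_abs, Real.sqrt_sq hab] at h3
    exact (le_abs_self _).trans h3
  have hle : (u + v) ⬝ᵥ M *ᵥ (u + v) ≤ (a + b) ^ 2 := by
    rw [expand hM.1]; nlinarith
  calc nrm M (u + v) ≤ Real.sqrt ((a + b) ^ 2) := Real.sqrt_le_sqrt hle
    _ = a + b := Real.sqrt_sq (by rw [ha', hb']; exact add_nonneg (nrm_nonneg _) (nrm_nonneg _))

lemma quad_smul (c : ℝ) (u : Fin d → ℝ) :
    (c • u) ⬝ᵥ M *ᵥ (c • u) = c ^ 2 * (u ⬝ᵥ M *ᵥ u) := by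
  simp only [Matrix.mulVec_smul, dotProduct_smul, smul_dotProduct, smul_eq_mul]
  ring

lemma nrm_smul (c : ℝ) (u : Fin d → ℝ) :
    nrm M (c • u) = |c| * nrm M u := by
  rw [nrm, quad_smul, Real.sqrt_mul (sq_nonneg c), Real.sqrt_sq_eq_abs, nrm]

lemma nrm_sum {ι : Type*} (hM : M.PosSemidef) (s : Finset ι) (g : ι → Fin d → ℝ) :
    nrm M (∑ i ∈ s, g i) ≤ ∑ i ∈ s, nrm M (g i) :=
  Finset.le_sum_of_subadditive (nrm M) (by simp [nrm]) (fun a b => nrm_tri hM a b) s g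

lemma inv_quad_le {A B : Matrix (Fin d) (Fin d) ℝ} (hA : A.PosDef) (hB : B.PosDef)
    (h : (B - A).PosSemidef) (u : Fin d → ℝ) :
    u ⬝ᵥ B⁻¹ *ᵥ u ≤ u ⬝ᵥ A⁻¹ *ᵥ u := by
  have hdetA : IsUnit A.det := isUnit_iff_ne_zero.mpr hA.det_pos.ne'
  have hdetB : IsUnit B.det := isUnit_iff_ne_zero.mpr hB.det_pos.ne'
  set z := B⁻¹ *ᵥ u with hz
  set y := A⁻¹ *ᵥ u with hy
  have hBz : B *ᵥ z = u := by
    rw [hz, Matrix.mulVec_mulVec, Matrix.mul_nonsing_inv _ hdetB, Matrix.one_mulVec]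
  have hAy : A *ᵥ y = u := by
    rw [hy, Matrix.mulVec_mulVec, Matrix.mul_nonsing_inv _ hdetA, Matrix.one_mulVec]
  have hq : 0 ≤ (y - z) ⬝ᵥ A *ᵥ (y - z) := psd_nonneg hA.posSemidef _
  have he : (y - z) ⬝ᵥ A *ᵥ (y - z)
      = y ⬝ᵥ A *ᵥ y - 2 * (y ⬝ᵥ A *ᵥ z) + z ⬝ᵥ A *ᵥ z := by
    rw [Matrix.mulVec_sub, sub_dotProduct, dotProduct_sub, dotProduct_sub,
      herm_symm hA.1 z y]
    ring
  have h1 : y ⬝ᵥ A *ᵥ y = u ⬝ᵥ A⁻¹ *ᵥ u := by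
    rw [hAy, dotProduct_comm, ← hy]
  have h2 : y ⬝ᵥ A *ᵥ z = u ⬝ᵥ B⁻¹ *ᵥ u := by
    rw [herm_symm hA.1 y z, hAy, dotProduct_comm, ← hz]
  have h3 : z ⬝ᵥ B *ᵥ z = u ⬝ᵥ B⁻¹ *ᵥ u := by
    rw [hBz, dotProduct_comm, ← hz]
  have h4 : z ⬝ᵥ A *ᵥ z ≤ z ⬝ᵥ B *ᵥ z := by
    have := psd_nonneg h z
    rw [Matrix.sub_mulVec, dotProduct_sub] at this
    linarith
  linarith [he ▸ hq]

lemma posdef_smul {A : Matrix (Fin d) (Fin d) ℝ} (hA : A.PosDef) {c : ℝ} (hc : 0 < c) :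
    (c • A).PosDef := by
  refine ⟨?_, fun x hx => ?_⟩
  · unfold Matrix.IsHermitian
    rw [Matrix.conjTranspose_smul, hA.1]
    simp
  · exact (hA.smul hc).2 hx

end WCAux

set_option maxHeartbeats 1000000 in
/-- Identifiability for weighted cores on adjacent datasets. -/
theorem weighted_cores_means_close_adjacent
    {d n : ℕ} (x x' : Fin n → Fin d → ℝ) (istar : Fin n)
    (hadj : ∀ i, i ≠ istar → x i = x' i)
    (lam : ℝ) (hlam : 0 < lam)
    (τ : ℕ) (hτ : (n : ℝ) / 2 + 1 < τ) (R : Finset (Fin n))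
    (Sig1 Sig2 : Matrix (Fin d) (Fin d) ℝ) (h1 : Sig1.PosDef) (h2 : Sig2.PosDef)
    (γ : ℝ) (hγ0 : 0 ≤ γ) (hγ : γ ≤ 1 / 2)
    (hlow : (Sig2 - (1 - γ) • Sig1).PosSemidef)
    (hhigh : ((1 / (1 - γ)) • Sig1 - Sig2).PosSemidef)
    (w v : Fin n → ℝ)
    (hw : IsWeightedCore x Sig1 τ lam R w) (hv : IsWeightedCore x' Sig2 τ lam R v)
    (ρ ηw ηv : ℝ) (hρ : ∑ i, |w i - v i| ≤ ρ)
    (hηw : ∀ i, |w i| ≤ ηw) (hηv : ∀ i, |v i| ≤ ηv) :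
    mahalSq Sig1 (∑ i, w i • x i - ∑ i, v i • x' i)
      ≤ (1 + 2 * γ) * lam * (ρ + ηw + ηv) ^ 2 := by
  classical
  obtain ⟨hw0, hw1, hwcore⟩ := hw
  obtain ⟨hv0, hv1, hvcore⟩ := hv
  have hγ1 : (0:ℝ) < 1 - γ := by linarith
  have hS1 : (Sig1⁻¹).PosSemidef := h1.inv.posSemidef
  -- comparison of Mahalanobis norms
  have hcomp : ∀ u : Fin d → ℝ, mahalSq Sig1 u ≤ mahalSq Sig2 u / (1 - γ) := by
    intro u
    have hc : (0:ℝ) < 1 / (1 - γ) := by positivity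
    have hB : ((1 / (1 - γ)) • Sig1).PosDef := WCAux.posdef_smul h1 hc
    have hle := WCAux.inv_quad_le h2 hB hhigh u
    have hinv : ((1 / (1 - γ)) • Sig1)⁻¹ = (1 - γ) • Sig1⁻¹ := by
      haveI : Invertible ((1:ℝ) / (1 - γ)) := invertibleOfNonzero hc.ne'
      rw [Matrix.inv_smul (A := Sig1) (k := (1:ℝ) / (1 - γ))
        (h := isUnit_iff_ne_zero.mpr h1.det_pos.ne'), invOf_eq_inv]
      congr 1
      field_simp
    rw [hinv] at hle
    have hsm : u ⬝ᵥ ((1 - γ) • Sig1⁻¹) *ᵥ u = (1 - γ) * (u ⬝ᵥ Sig1⁻¹ *ᵥ u) := by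
      simp [Matrix.smul_mulVec, dotProduct_smul]
    rw [hsm] at hle
    rw [mahalSq, mahalSq, le_div_iff₀ hγ1]
    linarith
  -- cardinality bound
  have hτn : n + 3 ≤ 2 * τ := by
    have hr : (n:ℝ) + 2 < 2 * τ := by linarith
    have : (n + 2 : ℕ) < 2 * τ := by exact_mod_cast hr
    omega
  set C : ℝ := Real.sqrt lam + Real.sqrt (lam / (1 - γ)) with hC
  have hC0 : 0 ≤ C := by rw [hC]; positivity
  -- pairwise bound
  have hpair0 : ∀ i j : Fin n, w i ≠ 0 → v j ≠ 0 →
      WCAux.nrm Sig1⁻¹ (x i - x' j) ≤ C := by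
    intro i j hi hj
    obtain ⟨N1, hN1R, hN1c, hN1⟩ := hwcore i hi
    obtain ⟨N2, hN2R, hN2c, hN2⟩ := hvcore j hj
    have hUcard : (N1 ∪ N2).card ≤ n := by
      calc (N1 ∪ N2).card ≤ (Finset.univ : Finset (Fin n)).card :=
            Finset.card_le_card (Finset.subset_univ _)
        _ = n := by simp
    have hIcard : 1 < (N1 ∩ N2).card := by
      have := Finset.card_inter_add_card_union N1 N2
      omega
    obtain ⟨k, hkmem, hkne⟩ := Finset.exists_mem_ne hIcard istar
    have hk1 : mahalSq Sig1 (x i - x k) ≤ lam := hN1 k (Finset.mem_inter.mp hkmem).1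
    have hk2 : mahalSq Sig2 (x' j - x' k) ≤ lam := hN2 k (Finset.mem_inter.mp hkmem).2
    have hxk : x k = x' k := hadj k hkne
    have hleg2 : mahalSq Sig1 (x k - x' j) ≤ lam / (1 - γ) := by
      have heq : x k - x' j = -(x' j - x' k) := by rw [hxk]; abel
      have hneg : mahalSq Sig1 (x k - x' j) = mahalSq Sig1 (x' j - x' k) := by
        rw [heq, mahalSq, mahalSq,
          show -(x' j - x' k) = (-1 : ℝ) • (x' j - x' k) from by simp,
          WCAux.quad_smul]
        ring
      rw [hneg]
      calc mahalSq Sig1 (x' j - x' k) ≤ mahalSq Sig2 (x' j - x' k) / (1 - γ) := hcomp _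
        _ ≤ lam / (1 - γ) := (div_le_div_iff_of_pos_right hγ1).mpr hk2
    have hsplit : x i - x' j = (x i - x k) + (x k - x' j) := (sub_add_sub_cancel _ _ _).symm
    calc WCAux.nrm Sig1⁻¹ (x i - x' j)
        ≤ WCAux.nrm Sig1⁻¹ (x i - x k) + WCAux.nrm Sig1⁻¹ (x k - x' j) := by
          rw [hsplit]; exact WCAux.nrm_tri hS1 _ _
      _ ≤ C := by
          rw [hC]
          exact add_le_add (Real.sqrt_le_sqrt hk1) (Real.sqrt_le_sqrt hleg2)
  -- extended dataset
  set y : Option (Fin n) → Fin d → ℝ := fun o => o.elim (x' istar) x with hy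
  set W : Option (Fin n) → ℝ := fun o => o.elim 0 w with hWdef
  set V : Option (Fin n) → ℝ :=
    fun o => o.elim (v istar) (fun i => if i = istar then 0 else v i) with hVdef
  have hW0 : ∀ o, 0 ≤ W o := by
    rintro (_ | i)
    · simp [hWdef]
    · simpa [hWdef] using hw0 i
  have hV0 : ∀ o, 0 ≤ V o := by
    rintro (_ | i)
    · simpa [hVdef] using hv0 istar
    · by_cases h : i = istar
      · simp [hVdef, h]
      · simpa [hVdef, h] using hv0 i
  have hW1 : ∑ o, W o = 1 := by
    rw [Fintype.sum_option]
    simpa [hWdef] using hw1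
  have hV1 : ∑ o, V o = 1 := by
    rw [Fintype.sum_option]
    have hs : ∀ i : Fin n, V (some i) = v i - (if i = istar then v istar else 0) := by
      intro i
      by_cases h : i = istar
      · simp [hVdef, h]
      · simp [hVdef, h]
    rw [Finset.sum_congr rfl fun i _ => hs i, Finset.sum_sub_distrib]
    simp [hVdef, hv1]
  have hWy : ∑ o, W o • y o = ∑ i, w i • x i := by
    rw [Fintype.sum_option]
    simp [hWdef, hy]
  have hVy : ∑ o, V o • y o = ∑ i, v i • x' i := by
    rw [Fintype.sum_option]
    have hs : ∀ i : Fin n, V (some i) • y (some i)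
        = v i • x' i - (if i = istar then v istar • x' istar else 0) := by
      intro i
      by_cases h : i = istar
      · simp [hVdef, hy, h]
      · simp [hVdef, hy, h, hadj i h]
    rw [Finset.sum_congr rfl fun i _ => hs i, Finset.sum_sub_distrib]
    have hite : ∑ i : Fin n, (if i = istar then v istar • x' istar else (0 : Fin d → ℝ))
        = v istar • x' istar := by simp
    have hnone : V none • y none = v istar • x' istar := by simp [hVdef, hy]
    rw [hite, hnone]
    abel
  have hδle : ∑ o, |W o - V o| ≤ ρ + ηw + ηv := by
    rw [Fintype.sum_option]
    have hsplit : ∑ i, |W (some i) - V (some i)|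
        = |w istar| + ∑ i ∈ Finset.univ.erase istar, |w i - v i| := by
      rw [← Finset.add_sum_erase _ _ (Finset.mem_univ istar)]
      congr 1
      · simp [hWdef, hVdef]
      · apply Finset.sum_congr rfl
        intro i hi
        simp [hWdef, hVdef, Finset.ne_of_mem_erase hi]
    have herase : ∑ i ∈ Finset.univ.erase istar, |w i - v i| ≤ ρ :=
      le_trans (Finset.sum_le_sum_of_subset_of_nonneg (Finset.erase_subset _ _)
        (fun i _ _ => abs_nonneg _)) hρ
    have hnone : |W none - V none| = |v istar| := by simp [hWdef, hVdef]
    rw [hsplit, hnone]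
    linarith [hηv istar, hηw istar]
  -- pairwise bound on extended indices
  have hpair : ∀ o p, W o ≠ 0 → V p ≠ 0 → WCAux.nrm Sig1⁻¹ (y o - y p) ≤ C := by
    rintro (_ | i) p ho hp
    · exact absurd (by simp [hWdef]) ho
    · have hwi : w i ≠ 0 := by simpa [hWdef] using ho
      rcases p with _ | j
      · have hvj : v istar ≠ 0 := by simpa [hVdef] using hp
        simpa [hy] using hpair0 i istar hwi hvj
      · have hj : j ≠ istar := by
          intro h
          exact hp (by simp [hVdef, h])
        have hvj : v j ≠ 0 := by simpa [hVdef, hj] using hp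
        have hyj : y (some j) = x' j := by simp [hy, hadj j hj]
        have hyi : y (some i) = x i := by simp [hy]
        rw [hyi, hyj]
        exact hpair0 i j hwi hvj
  -- positive / negative parts
  set P : Option (Fin n) → ℝ := fun o => max (W o - V o) 0 with hPdef
  set Mn : Option (Fin n) → ℝ := fun o => max (-(W o - V o)) 0 with hMdef
  have hPMo : ∀ o, P o - Mn o = W o - V o := fun o => max_zero_sub_eq_self _
  have habs : ∀ o, P o + Mn o = |W o - V o| := by
    intro o
    rcases le_total 0 (W o - V o) with h | h
    · rw [hPdef, hMdef]
      simp only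
      rw [max_eq_left h, max_eq_right (by linarith), abs_of_nonneg h]
      ring
    · rw [hPdef, hMdef]
      simp only
      rw [max_eq_right h, max_eq_left (by linarith), abs_of_nonpos h]
      ring
  have hP0 : ∀ o, 0 ≤ P o := fun o => le_max_right _ _
  have hM0 : ∀ o, 0 ≤ Mn o := fun o => le_max_right _ _
  have hPW : ∀ o, P o ≠ 0 → W o ≠ 0 := by
    intro o hPo
    have hδ : 0 < W o - V o := by
      rcases le_or_gt (W o - V o) 0 with hc | hc
      · exact absurd (max_eq_right hc) hPo
      · exact hc
    have := hV0 o
    exact ne_of_gt (by linarith)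
  have hMV : ∀ o, Mn o ≠ 0 → V o ≠ 0 := by
    intro o hMo
    have hδ : 0 < V o - W o := by
      rcases le_or_gt (-(W o - V o)) 0 with hc | hc
      · exact absurd (max_eq_right hc) hMo
      · linarith
    have := hW0 o
    exact ne_of_gt (by linarith)
  set s := ∑ o, P o with hs
  have hsM : ∑ o, Mn o = s := by
    have h0 : ∑ o, (W o - V o) = 0 := by
      rw [Finset.sum_sub_distrib, hW1, hV1]; ring
    have h1' : ∑ o, (P o - Mn o) = 0 := by
      rw [Finset.sum_congr rfl fun o _ => hPMo o]; exact h0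
    rw [Finset.sum_sub_distrib] at h1'
    rw [hs]; linarith
  have hs2 : 2 * s ≤ ρ + ηw + ηv := by
    have habs' : ∑ o, (P o + Mn o) = ∑ o, |W o - V o| :=
      Finset.sum_congr rfl fun o _ => habs o
    rw [Finset.sum_add_distrib, hsM, ← hs] at habs'
    linarith
  have hs0 : 0 ≤ s := Finset.sum_nonneg fun o _ => hP0 o
  have hdiff : ∑ i, w i • x i - ∑ i, v i • x' i = ∑ o, P o • y o - ∑ o, Mn o • y o := by
    rw [← hWy, ← hVy, ← Finset.sum_sub_distrib, ← Finset.sum_sub_distrib]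
    apply Finset.sum_congr rfl
    intro o _
    rw [← sub_smul, ← sub_smul, hPMo o]
  rcases eq_or_lt_of_le hs0 with hseq | hspos
  · -- s = 0 : the two means coincide
    have hPz : ∀ o, P o = 0 := by
      intro o
      exact (Finset.sum_eq_zero_iff_of_nonneg (fun o _ => hP0 o)).mp hseq.symm o
        (Finset.mem_univ o)
    have hMz : ∀ o, Mn o = 0 := by
      intro o
      have : ∑ o, Mn o = 0 := by rw [hsM, ← hseq]
      exact (Finset.sum_eq_zero_iff_of_nonneg (fun o _ => hM0 o)).mp this o (Finset.mem_univ o)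
    have hzero : ∑ i, w i • x i - ∑ i, v i • x' i = 0 := by
      rw [hdiff, Finset.sum_eq_zero (fun o _ => by rw [hPz o, zero_smul]),
        Finset.sum_eq_zero (fun o _ => by rw [hMz o, zero_smul]), sub_zero]
    rw [hzero]
    have : mahalSq Sig1 (0 : Fin d → ℝ) = 0 := by simp [mahalSq]
    rw [this]
    have h1' : (0:ℝ) ≤ 1 + 2 * γ := by linarith
    exact mul_nonneg (mul_nonneg h1' hlam.le) (sq_nonneg _)
  · -- s > 0
    have e1 : ∑ o, ∑ p, (P o * Mn p) • y o = s • ∑ o, P o • y o := by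
      rw [Finset.smul_sum]
      apply Finset.sum_congr rfl
      intro o _
      calc ∑ p, (P o * Mn p) • y o = (∑ p, P o * Mn p) • y o := by
            rw [Finset.sum_smul]
        _ = (P o * s) • y o := by rw [← Finset.mul_sum, hsM]
        _ = s • (P o • y o) := by rw [smul_smul, mul_comm]
    have e2 : ∑ o, ∑ p, (P o * Mn p) • y p = s • ∑ p, Mn p • y p := by
      rw [Finset.sum_comm, Finset.smul_sum]
      apply Finset.sum_congr rfl
      intro p _
      calc ∑ o, (P o * Mn p) • y p = (∑ o, P o * Mn p) • y p := by
            rw [Finset.sum_smul]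
        _ = (s * Mn p) • y p := by rw [← Finset.sum_mul, ← hs]
        _ = s • (Mn p • y p) := by rw [smul_smul]
    have key : ∑ o, ∑ p, (P o * Mn p) • (y o - y p)
        = s • (∑ o, P o • y o - ∑ o, Mn o • y o) := by
      rw [smul_sub, ← e1, ← e2, ← Finset.sum_sub_distrib]
      apply Finset.sum_congr rfl
      intro o _
      rw [← Finset.sum_sub_distrib]
      apply Finset.sum_congr rfl
      intro p _
      rw [smul_sub]
    have hNbound : WCAux.nrm Sig1⁻¹ (∑ o, ∑ p, (P o * Mn p) • (y o - y p)) ≤ s * (s * C) := by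
      calc WCAux.nrm Sig1⁻¹ (∑ o, ∑ p, (P o * Mn p) • (y o - y p))
          ≤ ∑ o, WCAux.nrm Sig1⁻¹ (∑ p, (P o * Mn p) • (y o - y p)) :=
            WCAux.nrm_sum hS1 _ _
        _ ≤ ∑ o, ∑ p, WCAux.nrm Sig1⁻¹ ((P o * Mn p) • (y o - y p)) :=
            Finset.sum_le_sum fun o _ => WCAux.nrm_sum hS1 _ _
        _ = ∑ o, ∑ p, (P o * Mn p) * WCAux.nrm Sig1⁻¹ (y o - y p) := by
            apply Finset.sum_congr rfl
            intro o _
            apply Finset.sum_congr rfl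
            intro p _
            rw [WCAux.nrm_smul, abs_of_nonneg (mul_nonneg (hP0 o) (hM0 p))]
        _ ≤ ∑ o, ∑ p, (P o * Mn p) * C := by
            apply Finset.sum_le_sum
            intro o _
            apply Finset.sum_le_sum
            intro p _
            by_cases h : P o * Mn p = 0
            · rw [h, zero_mul, zero_mul]
            · exact mul_le_mul_of_nonneg_left
                (hpair o p (hPW o (left_ne_zero_of_mul h)) (hMV p (right_ne_zero_of_mul h)))
                (mul_nonneg (hP0 o) (hM0 p))
        _ = s * (s * C) := by
            calc ∑ o, ∑ p, P o * Mn p * C = ∑ o, P o * ((∑ p, Mn p) * C) := by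
                  apply Finset.sum_congr rfl
                  intro o _
                  rw [Finset.sum_mul, Finset.mul_sum]
                  exact Finset.sum_congr rfl fun p _ => (mul_assoc _ _ _)
              _ = (∑ o, P o) * ((∑ p, Mn p) * C) := by rw [← Finset.sum_mul]
              _ = s * (s * C) := by rw [hsM, ← hs]
    have hNd : WCAux.nrm Sig1⁻¹ (∑ o, P o • y o - ∑ o, Mn o • y o) ≤ s * C := by
      have hNs : WCAux.nrm Sig1⁻¹ (s • (∑ o, P o • y o - ∑ o, Mn o • y o)) ≤ s * (s * C) := by
        rw [← key]; exact hNbound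
      rw [WCAux.nrm_smul, abs_of_nonneg hs0] at hNs
      exact le_of_mul_le_mul_left hNs hspos
    have hfinal1 : WCAux.nrm Sig1⁻¹ (∑ i, w i • x i - ∑ i, v i • x' i)
        ≤ ((ρ + ηw + ηv) / 2) * C := by
      rw [hdiff]
      refine hNd.trans ?_
      apply mul_le_mul_of_nonneg_right ?_ hC0
      linarith
    have hN0 : 0 ≤ WCAux.nrm Sig1⁻¹ (∑ i, w i • x i - ∑ i, v i • x' i) :=
      WCAux.nrm_nonneg _
    have hmah : mahalSq Sig1 (∑ i, w i • x i - ∑ i, v i • x' i)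
        = (WCAux.nrm Sig1⁻¹ (∑ i, w i • x i - ∑ i, v i • x' i)) ^ 2 :=
      (WCAux.nrm_sq hS1 _).symm
    -- the scalar inequality on C²
    have hC2 : C ^ 2 ≤ 4 * ((1 + 2 * γ) * lam) := by
      set t := Real.sqrt (1 - γ) with ht'
      have ht0 : 0 < t := Real.sqrt_pos.mpr hγ1
      have ht2 : t ^ 2 = 1 - γ := Real.sq_sqrt hγ1.le
      have ht1 : t ≤ 1 := by nlinarith
      have hth : 1 / 2 ≤ t ^ 2 := by rw [ht2]; linarith
      have hdiv : Real.sqrt (lam / (1 - γ)) = Real.sqrt lam / t := by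
        rw [ht', ← Real.sqrt_div hlam.le]
      have hsl : (Real.sqrt lam) ^ 2 = lam := Real.sq_sqrt hlam.le
      have hsl0 : 0 ≤ Real.sqrt lam := Real.sqrt_nonneg _
      have h4 : (1:ℝ) + 2 * γ = 3 - 2 * t ^ 2 := by rw [ht2]; ring
      have h8t : (0:ℝ) ≤ 8 * t := by linarith
      have h8 : 8 * t * (1 / 2) ≤ 8 * t * t ^ 2 := mul_le_mul_of_nonneg_left hth h8t
      have hfact : 0 ≤ (1 - t) * (8 * t ^ 3 + 8 * t ^ 2 - 3 * t - 1) :=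
        mul_nonneg (by linarith) (by nlinarith [h8, hth, ht0.le])
      have key2 : (t + 1) ^ 2 ≤ 4 * (3 - 2 * t ^ 2) * t ^ 2 := by nlinarith [hfact]
      have hc0' : (Real.sqrt lam / t) * t = Real.sqrt lam := div_mul_cancel₀ _ ht0.ne'
      have hgoal2 : C ^ 2 * t ^ 2 ≤ (4 * ((1 + 2 * γ) * lam)) * t ^ 2 := by
        have hexp : C ^ 2 * t ^ 2 = lam * (t + 1) ^ 2 := by
          have h5 : C ^ 2 * t ^ 2 = (C * t) ^ 2 := by ring
          have h6 : C * t = Real.sqrt lam * t + Real.sqrt lam := by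
            rw [hC, hdiv, add_mul, hc0']
          rw [h5, h6]
          linear_combination (t + 1) ^ 2 * hsl
        rw [hexp, h4]
        nlinarith [mul_le_mul_of_nonneg_left key2 hlam.le]
      exact le_of_mul_le_mul_right hgoal2 (pow_pos ht0 2)
    rw [hmah]
    calc (WCAux.nrm Sig1⁻¹ (∑ i, w i • x i - ∑ i, v i • x' i)) ^ 2
        ≤ (((ρ + ηw + ηv) / 2) * C) ^ 2 := pow_le_pow_left₀ hN0 hfinal1 2
      _ = ((ρ + ηw + ηv) ^ 2 / 4) * C ^ 2 := by ring
      _ ≤ ((ρ + ηw + ηv) ^ 2 / 4) * (4 * ((1 + 2 * γ) * lam)) :=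
          mul_le_mul_of_nonneg_left hC2 (by positivity)
      _ = (1 + 2 * γ) * lam * (ρ + ηw + ηv) ^ 2 := by ring
end

section
/- Fix a reference set R ⊆ [n], λ₀ > 0, k ∈ ℕ, and positive definite Σ₁, Σ₂ with (1−γ)Σ₁ ⪯ Σ₂ ⪯ (1/(1−γ))Σ₁ for γ ≤ 1/2 and k ≤ 1/(2γ). Let x, x' be datasets differing only in index i*. Let S_ℓ be the largest (|R|−ℓ, e^{ℓ/k}λ₀, Σ₁)-core for x and T_ℓ the largest (|R|−ℓ, e^{ℓ/k}λ₀, Σ₂)-core for x', both with respect to R. Then: (i) S_ℓ ⊆ S_{ℓ'} for all 0 ≤ ℓ ≤ ℓ' ≤ 2k; (ii) S_ℓ \ {i*} ⊆ T_{ℓ+1} for all 0 ≤ ℓ < 2k. -/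
open Matrix BigOperators

open scoped Classical

/-- The largest `(τ, λ, Σ)`-core of `x` with respect to `R`: the set of all indices `i`
with at least `τ` reference points `j ∈ R` satisfying `‖x_i − x_j‖²_Σ ≤ λ`. -/
noncomputable def largestCore {d n : ℕ} (x : Fin n → Fin d → ℝ)
    (Sig : Matrix (Fin d) (Fin d) ℝ) (τ : ℕ) (lam : ℝ) (R : Finset (Fin n)) :
    Finset (Fin n) :=
  Finset.univ.filter fun i =>
    τ ≤ (R.filter fun j => mahalSq Sig (x i - x j) ≤ lam).card

lemma inv_quad_mono {d : ℕ} (A B : Matrix (Fin d) (Fin d) ℝ) (hA : A.PosDef) (hB : B.PosDef)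
    (hBA : (B - A).PosSemidef) (u : Fin d → ℝ) :
    u ⬝ᵥ B⁻¹ *ᵥ u ≤ u ⬝ᵥ A⁻¹ *ᵥ u := by
  set v := B⁻¹ *ᵥ u with hv
  set a := A⁻¹ *ᵥ u with ha
  have hAT : Aᵀ = A := Matrix.IsSymm.eq (by simpa using hA.1)
  have hBv : B *ᵥ v = u := by
    rw [hv, mulVec_mulVec, B.mul_nonsing_inv hB.det_pos.ne'.isUnit, one_mulVec]
  have hAa : A *ᵥ a = u := by
    rw [ha, mulVec_mulVec, A.mul_nonsing_inv hA.det_pos.ne'.isUnit, one_mulVec]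
  have hsym : ∀ y z : Fin d → ℝ, y ⬝ᵥ A *ᵥ z = (A *ᵥ y) ⬝ᵥ z := by
    intro y z
    rw [dotProduct_mulVec, ← mulVec_transpose, hAT]
  have hquad : 0 ≤ (v - a) ⬝ᵥ A *ᵥ (v - a) := by
    have := hA.posSemidef.re_dotProduct_nonneg (v - a)
    simpa using this
  have hBAq : 0 ≤ v ⬝ᵥ (B - A) *ᵥ v := by
    have := hBA.re_dotProduct_nonneg v
    simpa using this
  have h1 : v ⬝ᵥ A *ᵥ v ≤ v ⬝ᵥ u := by
    have : v ⬝ᵥ (B - A) *ᵥ v = v ⬝ᵥ u - v ⬝ᵥ A *ᵥ v := by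
      rw [sub_mulVec, dotProduct_sub, hBv]
    linarith [hBAq, this ▸ hBAq]
  have hexp : (v - a) ⬝ᵥ A *ᵥ (v - a) = v ⬝ᵥ A *ᵥ v - 2 * (v ⬝ᵥ u) + a ⬝ᵥ u := by
    rw [mulVec_sub, dotProduct_sub, sub_dotProduct, sub_dotProduct]
    have e1 : v ⬝ᵥ A *ᵥ a = v ⬝ᵥ u := by rw [hAa]
    have e2 : a ⬝ᵥ A *ᵥ v = v ⬝ᵥ u := by rw [hsym, hAa, dotProduct_comm]
    have e3 : a ⬝ᵥ A *ᵥ a = a ⬝ᵥ u := by rw [hAa]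
    rw [e1, e2, e3]; ring
  have : v ⬝ᵥ u ≤ a ⬝ᵥ u := by nlinarith [hexp ▸ hquad]
  calc u ⬝ᵥ v = v ⬝ᵥ u := dotProduct_comm _ _
    _ ≤ a ⬝ᵥ u := this
    _ = u ⬝ᵥ a := dotProduct_comm _ _

/-- Nesting and intertwining of the family of largest cores on adjacent datasets. -/
theorem largest_cores_nested_and_intertwined
    {d n : ℕ} (x x' : Fin n → Fin d → ℝ) (istar : Fin n)
    (hadj : ∀ i, i ≠ istar → x i = x' i)
    (R : Finset (Fin n)) (lam0 : ℝ) (hlam0 : 0 < lam0)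
    (k : ℕ) (hk0 : 0 < k)
    (Sig1 Sig2 : Matrix (Fin d) (Fin d) ℝ) (h1 : Sig1.PosDef) (h2 : Sig2.PosDef)
    (γ : ℝ) (hγ0 : 0 ≤ γ) (hγ : γ ≤ 1 / 2) (hkγ : (k : ℝ) * (2 * γ) ≤ 1)
    (hlow : (Sig2 - (1 - γ) • Sig1).PosSemidef)
    (hhigh : ((1 / (1 - γ)) • Sig1 - Sig2).PosSemidef) :
    (∀ ℓ ℓ', ℓ ≤ ℓ' → ℓ' ≤ 2 * k →
      largestCore x Sig1 (R.card - ℓ) (Real.exp (ℓ / k : ℝ) * lam0) R ⊆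
        largestCore x Sig1 (R.card - ℓ') (Real.exp (ℓ' / k : ℝ) * lam0) R) ∧
    (∀ ℓ < 2 * k,
      (largestCore x Sig1 (R.card - ℓ) (Real.exp (ℓ / k : ℝ) * lam0) R).erase istar ⊆
        largestCore x' Sig2 (R.card - (ℓ + 1)) (Real.exp ((ℓ + 1) / k : ℝ) * lam0) R) := by
  have hkR : (0:ℝ) < k := by exact_mod_cast hk0
  constructor
  · -- part (i)
    intro ℓ ℓ' hle _ i hi
    simp only [largestCore, Finset.mem_filter, Finset.mem_univ, true_and] at hi ⊢
    have hlam : Real.exp (ℓ / k : ℝ) * lam0 ≤ Real.exp (ℓ' / k : ℝ) * lam0 := by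
      apply mul_le_mul_of_nonneg_right _ hlam0.le
      exact Real.exp_le_exp.mpr (by
        apply div_le_div_of_nonneg_right _ hkR.le
        exact_mod_cast hle)
    have hsub : (R.filter fun j => mahalSq Sig1 (x i - x j) ≤ Real.exp (ℓ / k : ℝ) * lam0) ⊆
        (R.filter fun j => mahalSq Sig1 (x i - x j) ≤ Real.exp (ℓ' / k : ℝ) * lam0) := by
      intro j hj
      rw [Finset.mem_filter] at hj ⊢
      exact ⟨hj.1, hj.2.trans hlam⟩
    have hcard := Finset.card_le_card hsub
    omega
  · -- part (ii)
    intro ℓ _ i hi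
    rw [Finset.mem_erase] at hi
    obtain ⟨hine, hi⟩ := hi
    simp only [largestCore, Finset.mem_filter, Finset.mem_univ, true_and] at hi ⊢
    have hpos : (0:ℝ) < 1 - γ := by linarith
    -- inverse of the scaled matrix
    have hApd : ((1 - γ) • Sig1).PosDef := by
      constructor
      · show ((1 - γ) • Sig1)ᴴ = _
        rw [Matrix.conjTranspose_smul, h1.1.eq]
        simp
      · exact (h1.smul hpos).2
    have hAinv : ((1 - γ) • Sig1)⁻¹ = (1 - γ)⁻¹ • Sig1⁻¹ := by
      apply Matrix.inv_eq_right_inv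
      rw [Matrix.smul_mul, Matrix.mul_smul, smul_smul,
        Sig1.mul_nonsing_inv h1.det_pos.ne'.isUnit, mul_inv_cancel₀ hpos.ne', one_smul]
    have hmahal : ∀ u, mahalSq Sig2 u ≤ (1 - γ)⁻¹ * mahalSq Sig1 u := by
      intro u
      have := inv_quad_mono ((1 - γ) • Sig1) Sig2 hApd h2 hlow u
      rwa [hAinv, smul_mulVec, dotProduct_smul, smul_eq_mul] at this
    -- the exponential bound on 1/(1-γ)
    have h2γ : 2 * γ ≤ 1 / (k:ℝ) := by
      rw [le_div_iff₀ hkR]; linarith [hkγ]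
    have hexp1 : (1:ℝ) ≤ Real.exp (2 * γ) * (1 - γ) := by
      nlinarith [Real.add_one_le_exp (2 * γ)]
    have heinv : (1 - γ)⁻¹ ≤ Real.exp (1 / (k:ℝ)) := by
      have h1' : (1 - γ)⁻¹ ≤ Real.exp (2 * γ) := by
        rw [inv_le_iff_one_le_mul₀' hpos] at *
        nlinarith [hexp1]
      exact h1'.trans (Real.exp_le_exp.mpr h2γ)
    have hsplit : Real.exp (((ℓ:ℝ) + 1) / (k:ℝ)) * lam0 =
        Real.exp (1 / (k:ℝ)) * (Real.exp ((ℓ:ℝ) / k) * lam0) := by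
      rw [show ((ℓ:ℝ) + 1) / k = 1 / (k:ℝ) + (ℓ:ℝ) / k by ring, Real.exp_add]
      ring
    -- subset of reference points
    have hsub : ((R.filter fun j => mahalSq Sig1 (x i - x j) ≤ Real.exp (ℓ / k : ℝ) * lam0)).erase istar ⊆
        (R.filter fun j => mahalSq Sig2 (x' i - x' j) ≤ Real.exp ((ℓ + 1) / k : ℝ) * lam0) := by
      intro j hj
      rw [Finset.mem_erase, Finset.mem_filter] at hj
      obtain ⟨hjne, hjR, hjm⟩ := hj
      rw [Finset.mem_filter]
      refine ⟨hjR, ?_⟩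
      rw [← hadj i hine, ← hadj j hjne]
      have step1 : mahalSq Sig2 (x i - x j) ≤ (1 - γ)⁻¹ * mahalSq Sig1 (x i - x j) :=
        hmahal _
      have step2 : (1 - γ)⁻¹ * mahalSq Sig1 (x i - x j) ≤ (1 - γ)⁻¹ * (Real.exp (ℓ / k : ℝ) * lam0) :=
        mul_le_mul_of_nonneg_left hjm (inv_nonneg.mpr hpos.le)
      have hXpos : (0:ℝ) < Real.exp ((ℓ:ℝ) / k) * lam0 := by positivity
      have step3 : (1 - γ)⁻¹ * (Real.exp (ℓ / k : ℝ) * lam0) ≤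
          Real.exp (1 / (k:ℝ)) * (Real.exp ((ℓ:ℝ) / k) * lam0) :=
        mul_le_mul_of_nonneg_right heinv hXpos.le
      calc mahalSq Sig2 (x i - x j) ≤ (1 - γ)⁻¹ * (Real.exp (ℓ / k : ℝ) * lam0) :=
            step1.trans step2
        _ ≤ Real.exp (1 / (k:ℝ)) * (Real.exp ((ℓ:ℝ) / k) * lam0) := step3
        _ = Real.exp ((ℓ + 1) / k : ℝ) * lam0 := by rw [← hsplit]
    have hcard1 := Finset.card_le_card hsub
    have hcard2 : (R.filter fun j => mahalSq Sig1 (x i - x j) ≤ Real.exp (ℓ / k : ℝ) * lam0).card - 1 ≤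
        (((R.filter fun j => mahalSq Sig1 (x i - x j) ≤ Real.exp (ℓ / k : ℝ) * lam0)).erase istar).card :=
      Finset.pred_card_le_card_erase
    omega
end

section
/- Fix k, n ∈ ℕ with k ≥ 1 and n ≥ 4k, and let c, c' ∈ {0,...,k}^n be count vectors with normalizers Z = ∑_i c_i and Z' = ∑_i c'_i. Suppose Z, Z' ≥ k(n−k), |Z − Z'| ≤ 2k, there is exactly one index i* with |c_{i*} − c'_{i*}| ≤ k possibly large, and at most k further indices i where |c_i − c'_i| ≤ 1 (all other coordinates equal). Then the normalized weight vectors w = c/Z and w' = c'/Z' satisfy ‖w − w'‖₁ ≤ 2nk²/(k²(n−k)²) + 2k/(k(n−k)) ≤ 4(1 + 2k/n)²/n. -/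
open BigOperators
open scoped Classical

set_option maxHeartbeats 1000000 in
/-- Arithmetic core of the stability proof for the stable-mean weights: count vectors
`c, c'` that are close (one arbitrary coordinate change of size ≤ k, at most `k` further
coordinates changing by at most 1) with large normalizers produce normalized weight
vectors that are `ℓ₁`-close. -/
theorem normalized_count_weights_close
    (k n : ℕ) (hk : 1 ≤ k) (hn : 4 * k ≤ n)
    (c c' : Fin n → ℕ)
    (hc : ∀ i, c i ≤ k) (hc' : ∀ i, c' i ≤ k)
    (hZ : k * (n - k) ≤ ∑ i, c i) (hZ' : k * (n - k) ≤ ∑ i, c' i)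
    (hZZ' : |(∑ i, c i : ℤ) - (∑ i, c' i : ℤ)| ≤ 2 * k)
    (istar : Fin n)
    (hone : ∀ i, i ≠ istar → |(c i : ℤ) - (c' i : ℤ)| ≤ 1)
    (hfew : (Finset.univ.filter fun i => i ≠ istar ∧ c i ≠ c' i).card ≤ k) :
    (∑ i, |(c i : ℝ) / (∑ j, c j : ℕ) - (c' i : ℝ) / (∑ j, c' j : ℕ)|
        ≤ 2 * n * k ^ 2 / (k ^ 2 * ((n : ℝ) - k) ^ 2) + 2 * k / (k * ((n : ℝ) - k))) ∧
    (2 * n * k ^ 2 / (k ^ 2 * ((n : ℝ) - k) ^ 2) + 2 * k / (k * ((n : ℝ) - k))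
        ≤ 4 * (1 + 2 * k / n) ^ 2 / n) := by
  have hk1 : (1:ℝ) ≤ k := by exact_mod_cast hk
  have hkpos : (0:ℝ) < k := lt_of_lt_of_le one_pos hk1
  have hn4 : (4:ℝ) * k ≤ n := by exact_mod_cast hn
  have hnkpos : (0:ℝ) < (n:ℝ) - k := by nlinarith
  have hnpos : (0:ℝ) < n := by nlinarith
  have hknnat : k ≤ n := by omega
  set Z : ℕ := ∑ i, c i with hZdef
  set Z' : ℕ := ∑ i, c' i with hZ'def
  have hnkcast : ((n - k : ℕ) : ℝ) = (n:ℝ) - k := by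
    push_cast [Nat.cast_sub hknnat]; ring
  have hZr : (k:ℝ) * ((n:ℝ) - k) ≤ (Z:ℝ) := by
    rw [← hnkcast]; exact_mod_cast hZ
  have hZ'r : (k:ℝ) * ((n:ℝ) - k) ≤ (Z':ℝ) := by
    rw [← hnkcast]; exact_mod_cast hZ'
  have hZpos : (0:ℝ) < Z := lt_of_lt_of_le (by positivity) hZr
  have hZ'pos : (0:ℝ) < Z' := lt_of_lt_of_le (by positivity) hZ'r
  -- difference of sums
  have habs : |(Z':ℝ) - Z| ≤ 2 * k := by
    rw [abs_sub_comm]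
    have : |(Z:ℤ) - Z'| ≤ 2 * k := by exact_mod_cast hZZ'
    exact_mod_cast this
  -- pointwise bound
  have hpt : ∀ i, |(c i:ℝ)/Z - (c' i:ℝ)/Z'|
      ≤ (c i:ℝ) * |1/(Z:ℝ) - 1/(Z':ℝ)| + |(c i:ℝ) - c' i| / Z' := by
    intro i
    have heq : (c i:ℝ)/Z - (c' i:ℝ)/Z'
        = (c i:ℝ) * (1/(Z:ℝ) - 1/(Z':ℝ)) + ((c i:ℝ) - c' i)/Z' := by
      field_simp
      ring
    rw [heq]
    refine (abs_add_le _ _).trans ?_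
    rw [abs_mul, abs_div, abs_of_nonneg (Nat.cast_nonneg _), abs_of_pos hZ'pos]
  -- bound on the total variation of counts
  have hS : ∑ i, |(c i:ℝ) - c' i| ≤ 2 * k := by
    have h1 : |(c istar:ℝ) - c' istar| ≤ k := by
      have h1' := hc istar
      have h2' : 0 ≤ c' istar := Nat.zero_le _
      have h3' := hc' istar
      rw [abs_le]
      constructor
      · have : (c' istar : ℝ) ≤ k := by exact_mod_cast h3'
        have : (0:ℝ) ≤ c istar := Nat.cast_nonneg _
        nlinarith [Nat.cast_nonneg (α := ℝ) (c istar), (by exact_mod_cast h3' : (c' istar:ℝ) ≤ k)]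
      · nlinarith [Nat.cast_nonneg (α := ℝ) (c' istar), (by exact_mod_cast h1' : (c istar:ℝ) ≤ k)]
    have hcard : (((Finset.univ.erase istar)).filter fun i => ¬ c i = c' i).card ≤ k := by
      refine le_trans (Finset.card_le_card ?_) hfew
      intro i hi
      simp only [Finset.mem_filter, Finset.mem_erase, Finset.mem_univ, true_and] at hi ⊢
      exact ⟨hi.1.1, hi.2⟩
    have h2 : ∑ i ∈ Finset.univ.erase istar, |(c i:ℝ) - c' i| ≤ k := by
      calc ∑ i ∈ Finset.univ.erase istar, |(c i:ℝ) - c' i|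
          ≤ ∑ i ∈ Finset.univ.erase istar, (if c i = c' i then (0:ℝ) else 1) := by
            apply Finset.sum_le_sum
            intro i hi
            by_cases h : c i = c' i
            · simp [h]
            · simp only [if_neg h]
              have h3 := hone i (Finset.ne_of_mem_erase hi)
              have : |(c i:ℝ) - c' i| = ((|(c i:ℤ) - c' i| : ℤ) : ℝ) := by
                push_cast
                ring_nf
              rw [this]
              exact_mod_cast h3
        _ = ((Finset.univ.erase istar).filter fun i => ¬ c i = c' i).card := by
            rw [Finset.sum_ite, Finset.sum_const, Finset.sum_const]
            simp
        _ ≤ (k:ℝ) := by exact_mod_cast hcard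
    calc ∑ i, |(c i:ℝ) - c' i|
        = |(c istar:ℝ) - c' istar| + ∑ i ∈ Finset.univ.erase istar, |(c i:ℝ) - c' i| := by
          rw [← Finset.add_sum_erase _ _ (Finset.mem_univ istar)]
      _ ≤ k + k := add_le_add h1 h2
      _ = 2 * k := by ring
  -- the key ℓ¹ bound
  have hA : (Z:ℝ) * |1/(Z:ℝ) - 1/(Z':ℝ)| = |(Z':ℝ) - Z| / Z' := by
    rw [div_sub_div _ _ (ne_of_gt hZpos) (ne_of_gt hZ'pos), abs_div,
      abs_of_pos (mul_pos hZpos hZ'pos)]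
    rw [one_mul, mul_one]
    field_simp
  have key : ∑ i, |(c i:ℝ)/Z - (c' i:ℝ)/Z'| ≤ 4 * k / Z' := by
    calc ∑ i, |(c i:ℝ)/Z - (c' i:ℝ)/Z'|
        ≤ ∑ i, ((c i:ℝ) * |1/(Z:ℝ) - 1/(Z':ℝ)| + |(c i:ℝ) - c' i| / Z') :=
          Finset.sum_le_sum fun i _ => hpt i
      _ = (Z:ℝ) * |1/(Z:ℝ) - 1/(Z':ℝ)| + (∑ i, |(c i:ℝ) - c' i|) / Z' := by
          rw [Finset.sum_add_distrib, ← Finset.sum_mul, ← Finset.sum_div]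
          congr 1
          rw [hZdef]
          push_cast
          ring
      _ = |(Z':ℝ) - Z| / Z' + (∑ i, |(c i:ℝ) - c' i|) / Z' := by rw [hA]
      _ ≤ (2*k) / Z' + (2*k) / Z' := by
          gcongr
      _ = 4 * k / Z' := by ring
  have key2 : ∑ i, |(c i:ℝ)/Z - (c' i:ℝ)/Z'| ≤ 4 * k / (k * ((n:ℝ) - k)) := by
    refine key.trans ?_
    gcongr
  constructor
  · refine key2.trans ?_
    have h1 : 2*(k:ℝ)/(k*((n:ℝ)-k)) ≤ 2*n*k^2/(k^2*((n:ℝ)-k)^2) := by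
      rw [div_le_div_iff₀ (by positivity) (by positivity)]
      nlinarith [mul_pos (mul_pos (mul_pos hkpos hkpos) (mul_pos hkpos hkpos)) hnkpos]
    have h2 : 4*(k:ℝ)/(k*((n:ℝ)-k)) = 2*k/(k*((n:ℝ)-k)) + 2*k/(k*((n:ℝ)-k)) := by ring
    rw [h2]
    gcongr
  · have e1 : 2*(n:ℝ)*k^2/(k^2*((n:ℝ)-k)^2) = 2*n/(((n:ℝ)-k)^2) := by
      field_simp
    have e2 : 2*(k:ℝ)/(k*((n:ℝ)-k)) = 2/((n:ℝ)-k) := by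
      field_simp
    have e3 : 4*(1+2*(k:ℝ)/(n:ℝ))^2/(n:ℝ) = 4*((n:ℝ)+2*k)^2/(n:ℝ)^3 := by
      field_simp
    rw [e1, e2, e3]
    have e4 : 2*(n:ℝ)/(((n:ℝ)-k)^2) + 2/((n:ℝ)-k)
        = (2*(n:ℝ) + 2*((n:ℝ)-k))/(((n:ℝ)-k)^2) := by
      field_simp
    rw [e4, div_le_div_iff₀ (by positivity) (by positivity)]
    nlinarith [mul_nonneg (mul_nonneg hkpos.le (mul_nonneg hnpos.le hnpos.le)) (sub_nonneg.2 hn4),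
      mul_nonneg (mul_nonneg (mul_nonneg hkpos.le hkpos.le) hnpos.le) (sub_nonneg.2 hn4),
      mul_nonneg (mul_nonneg (mul_nonneg hkpos.le hkpos.le) hkpos.le) (sub_nonneg.2 hn4)]
end
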